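/- arXiv:2105.07074 — 9 statements merged into one kernel-verified Lean document; each statement's English description precedes it below -/
import Mathlib

section
/- Define π₁ = 1/(1 + B(1+ρ)) if ρ = β, and π₁ = ρ^B(β−ρ) / (ρ^B(β−ρ) + β(1+ρ)(β^B − ρ^B)) if ρ ≠ β; and for 1 ≤ i ≤ B set π_{2i} = (β/ρ)^i · π₁ and π_{2i+1} = ρ·(β/ρ)^i · π₁. Then these numbers satisfy all of the listed global balance equations together with the normalization Σ_{i=1}^{2B+1} π_i = 1. -/
/-!
Write `r = β/ρ`. The departure equations `μ π_{2i+1} = λ π_{2i}` hold because `μρ = λ`, and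
every other balance equation reduces to them via `λ r = η`. Normalization reads
`π₁ (1 + (1 + ρ) S) = 1` with `S = ∑_{i=1}^B r^i`; for `ρ ≠ β` the closed form of `π₁`
comes from `ρ^B (β - ρ) S = β (β^B - ρ^B)`.
-/

open Finset

theorem Finset.sum_Icc_one_two_mul_add_one {M : Type*} [AddCommMonoid M] (f : ℕ → M) (n : ℕ) :
    ∑ i ∈ Icc 1 (2 * n + 1), f i = f 1 + ∑ i ∈ Icc 1 n, (f (2 * i) + f (2 * i + 1)) := by
  induction n with
  | zero => simp
  | succ n ih =>
    rw [show 2 * (n + 1) + 1 = 2 * n + 1 + 1 + 1 by ring,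
      sum_Icc_succ_top (show 1 ≤ 2 * n + 1 + 1 + 1 by omega),
      sum_Icc_succ_top (show 1 ≤ 2 * n + 1 + 1 by omega),
      sum_Icc_succ_top (show 1 ≤ n + 1 by omega), ih,
      show 2 * n + 1 + 1 = 2 * (n + 1) by ring, add_assoc, add_assoc]
theorem sum_Icc_two_mul_add_one_of_geometric {R : Type*} [CommRing R] {p : ℕ → R} {a r c : R}
    {n : ℕ} (h1 : p 1 = c) (heven : ∀ i, 1 ≤ i → i ≤ n → p (2 * i) = r ^ i * c)
    (hodd : ∀ i, 1 ≤ i → i ≤ n → p (2 * i + 1) = a * r ^ i * c) :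
    ∑ i ∈ Icc 1 (2 * n + 1), p i = c * (1 + (1 + a) * ∑ i ∈ Icc 1 n, r ^ i) := by
  have hpairs : ∀ i ∈ Icc 1 n, p (2 * i) + p (2 * i + 1) = (1 + a) * c * r ^ i := by
    intro i hi
    rw [mem_Icc] at hi
    rw [heven i hi.1 hi.2, hodd i hi.1 hi.2]
    ring
  rw [sum_Icc_one_two_mul_add_one, sum_congr rfl hpairs, ← mul_sum, h1]
  ring

theorem pow_mul_sub_mul_sum_Icc_div_pow {K : Type*} [Field K] {x : K} (hx : x ≠ 0) (y : K)
    (n : ℕ) : x ^ n * (y - x) * ∑ i ∈ Icc 1 n, (y / x) ^ i = y * (y ^ n - x ^ n) := by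
  have hgeom := geom_sum_Ico_mul (y / x) (Nat.le_add_left 1 n)
  rw [Ico_add_one_right_eq_Icc] at hgeom
  calc x ^ n * (y - x) * ∑ i ∈ Icc 1 n, (y / x) ^ i
      = x ^ (n + 1) * ((∑ i ∈ Icc 1 n, (y / x) ^ i) * (y / x - 1)) := by field_simp; ring
    _ = y * (y ^ n - x ^ n) := by rw [hgeom, div_pow, div_pow]; field_simp; ring

theorem stationary_pi1_mul_normalizer {rho beta : ℝ} (hrho : 0 < rho) (hbeta : 0 < beta)
    (B : ℕ) :
    (if rho = beta then 1 / (1 + (B : ℝ) * (1 + rho))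
      else rho ^ B * (beta - rho) /
        (rho ^ B * (beta - rho) + beta * (1 + rho) * (beta ^ B - rho ^ B))) *
      (1 + (1 + rho) * ∑ i ∈ Icc 1 B, (beta / rho) ^ i) = 1 := by
  have hS : 1 + (1 + rho) * ∑ i ∈ Icc 1 B, (beta / rho) ^ i ≠ 0 := by positivity
  split_ifs with hcase
  · simp only [← hcase, div_self hrho.ne', one_pow, sum_const, Nat.card_Icc, nsmul_eq_mul,
      mul_one, add_tsub_cancel_right]
    field_simp
  · have hN : rho ^ B * (beta - rho) ≠ 0 :=
      mul_ne_zero (pow_ne_zero _ hrho.ne') (sub_ne_zero.mpr (Ne.symm hcase))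
    have hD : rho ^ B * (beta - rho) + beta * (1 + rho) * (beta ^ B - rho ^ B) =
        rho ^ B * (beta - rho) * (1 + (1 + rho) * ∑ i ∈ Icc 1 B, (beta / rho) ^ i) := by
      linear_combination (-(1 + rho)) * pow_mul_sub_mul_sum_Icc_div_pow hrho.ne' beta B
    rw [hD, div_mul_eq_div_div, div_self hN, one_div, inv_mul_cancel₀ hS]

/-- LCFS-NP, EH only when system is empty: the proposed stationary probabilities
satisfy all global balance equations and the normalization condition. -/
theorem stmt_0 (lam eta mu : ℝ) (hlam : 0 < lam) (heta : 0 < eta) (hmu : 0 < mu)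
    (B : ℕ) (hB : 2 ≤ B)
    (rho beta : ℝ) (hrho : rho = lam / mu) (hbeta : beta = eta / mu)
    (pi1 : ℝ)
    (hpi1 : pi1 = if rho = beta then 1 / (1 + (B : ℝ) * (1 + rho))
      else rho ^ B * (beta - rho) /
        (rho ^ B * (beta - rho) + beta * (1 + rho) * (beta ^ B - rho ^ B)))
    (pi : ℕ → ℝ)
    (hp1 : pi 1 = pi1)
    (hpeven : ∀ i, 1 ≤ i → i ≤ B → pi (2 * i) = (beta / rho) ^ i * pi1)
    (hpodd : ∀ i, 1 ≤ i → i ≤ B → pi (2 * i + 1) = rho * (beta / rho) ^ i * pi1) :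
    eta * pi 1 = mu * pi 3 ∧
    (eta + lam) * pi 2 = eta * pi 1 + mu * pi 5 ∧
    (∀ i, 2 ≤ i → i ≤ B - 1 →
      (eta + lam) * pi (2 * i) = eta * pi (2 * i - 2) + mu * pi (2 * i + 3)) ∧
    lam * pi (2 * B) = eta * pi (2 * B - 2) ∧
    (∀ i, 1 ≤ i → i ≤ B → mu * pi (2 * i + 1) = lam * pi (2 * i)) ∧
    ∑ i ∈ Finset.Icc 1 (2 * B + 1), pi i = 1 := by
  have hrho0 : 0 < rho := hrho ▸ div_pos hlam hmu
  have hbeta0 : 0 < beta := hbeta ▸ div_pos heta hmu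
  have hlam_eq : lam = mu * rho := by rw [hrho]; field_simp
  have heta_eq : eta = lam * (beta / rho) := by rw [hrho, hbeta]; field_simp
  have hdep : ∀ i, 1 ≤ i → i ≤ B → mu * pi (2 * i + 1) = lam * pi (2 * i) := by
    intro i h1 h2
    rw [hpeven i h1 h2, hpodd i h1 h2, hlam_eq]
    ring
  have hstep : ∀ i, 1 ≤ i → i < B → pi (2 * (i + 1)) = beta / rho * pi (2 * i) := by
    intro i h1 h2
    rw [hpeven i h1 h2.le, hpeven (i + 1) (by omega) h2, pow_succ]
    ring
  have hp2 : pi 2 = beta / rho * pi 1 := by rw [hp1]; simpa using hpeven 1 le_rfl (by omega)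
  refine ⟨?_, ?_, ?_, ?_, hdep, ?_⟩
  · rw [hdep 1 le_rfl (by omega), hp2, heta_eq]
    ring
  · rw [hdep 2 (by omega) hB, hstep 1 le_rfl (by omega), hp2, heta_eq]
    ring
  · intro i h2 hiB
    obtain ⟨j, rfl⟩ : ∃ j, i = j + 1 := ⟨i - 1, by omega⟩
    rw [show 2 * (j + 1) - 2 = 2 * j by omega, show 2 * (j + 1) + 3 = 2 * (j + 2) + 1 by omega,
      hdep (j + 2) (by omega) (by omega), hstep (j + 1) (by omega) (by omega),
      hstep j (by omega) (by omega), heta_eq]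
    ring
  · obtain ⟨j, rfl⟩ : ∃ j, B = j + 1 := ⟨B - 1, by omega⟩
    rw [show 2 * (j + 1) - 2 = 2 * j by omega, hstep j (by omega) (by omega), heta_eq]
    ring
  · rw [sum_Icc_two_mul_add_one_of_geometric hp1 hpeven hpodd, hpi1]
    exact stationary_pi1_mul_normalizer hrho0 hbeta0 B
end

section
/- Let s ∈ ℝ with s̄ = s/μ < min(1, ρ, β). Suppose real numbers v_{q,0}, v_{q,1} for q = 1,…,2B+1 satisfy: (η−s)·v_{1,0} = μ·v_{3,1} and (η−s)·v_{1,1} = μ·π₃; (η+λ−s)·v_{2,0} = μ·v_{5,1} + η·v_{1,0} and (η+λ−s)·v_{2,1} = μ·π₅ + η·π₁; for 2 ≤ k ≤ B−1, (η+λ−s)·v_{2k,0} = μ·v_{2k+3,1} + η·v_{2k−2,0} and (η+λ−s)·v_{2k,1} = μ·π_{2k+3} + η·π_{2k−2}; (λ−s)·v_{2B,0} = η·v_{2B−2,0} and (λ−s)·v_{2B,1} = η·π_{2B−2}; for 1 ≤ k ≤ B, (μ−s)·v_{2k+1,0} = λ·v_{2k,0} and (μ−s)·v_{2k+1,1} =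 λ·π_{2k}. Then Σ_{q=1}^{2B+1} v_{q,0} = ρ·π₁·[s̄²θ − s̄·θ(1+ρ+β) + β(1 + θ + θρ)] / ((1−s̄)²(ρ−s̄)(β−s̄)). -/
lemma sum_pair (f : ℕ → ℝ) (n : ℕ) :
    ∑ q ∈ Finset.Icc 1 (2 * n + 1), f q
      = f 1 + ∑ k ∈ Finset.Icc 1 n, (f (2 * k) + f (2 * k + 1)) := by
  induction n with
  | zero => simp
  | succ m ih =>
    have h1 : 2 * (m + 1) + 1 = (2 * m + 1) + 1 + 1 := by ring
    rw [h1, Finset.sum_Icc_succ_top (by omega), Finset.sum_Icc_succ_top (by omega),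
      ih, Finset.sum_Icc_succ_top (Nat.one_le_iff_ne_zero.mpr (by omega))]
    rw [show 2 * (m + 1) = 2 * m + 1 + 1 from by omega]
    ring

lemma geom_icc (x : ℝ) (hx1 : x ≠ 1) (B : ℕ) :
    ∑ k ∈ Finset.Icc 1 B, x ^ k = x * ((x ^ B - 1) / (x - 1)) := by
  have h : Finset.Icc 1 B = Finset.Ico 1 (B + 1) := by rw [Finset.Ico_add_one_right_eq_Icc]
  rw [h, Finset.sum_Ico_eq_sum_range]
  simp only [pow_add, pow_one]
  rw [← Finset.mul_sum, geom_sum_eq hx1, show B + 1 - 1 = B from by omega]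

set_option maxHeartbeats 1600000

/-- LCFS-NP, EH only when system is empty: the solution of the SHS equations sums
to the claimed MGF of AoI. -/
theorem stmt_2 (lam eta mu : ℝ) (hlam : 0 < lam) (heta : 0 < eta) (hmu : 0 < mu)
    (B : ℕ) (hB : 2 ≤ B)
    (rho beta : ℝ) (hrho : rho = lam / mu) (hbeta : beta = eta / mu)
    (theta pi1 : ℝ)
    (htheta : theta = if rho = beta then (B : ℝ)
      else beta * (beta ^ B - rho ^ B) / (rho ^ B * (beta - rho)))
    (hpi1 : pi1 = if rho = beta then 1 / (1 + (B : ℝ) * (1 + rho))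
      else rho ^ B * (beta - rho) /
        (rho ^ B * (beta - rho) + beta * (1 + rho) * (beta ^ B - rho ^ B)))
    (pi : ℕ → ℝ)
    (hp1 : pi 1 = pi1)
    (hpeven : ∀ i, 1 ≤ i → i ≤ B → pi (2 * i) = (beta / rho) ^ i * pi1)
    (hpodd : ∀ i, 1 ≤ i → i ≤ B → pi (2 * i + 1) = rho * (beta / rho) ^ i * pi1)
    (s sbar : ℝ) (hsbar : sbar = s / mu) (hs : sbar < min 1 (min rho beta))
    (v0 v1 : ℕ → ℝ)
    (e1a : (eta - s) * v0 1 = mu * v1 3)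
    (e1b : (eta - s) * v1 1 = mu * pi 3)
    (e2a : (eta + lam - s) * v0 2 = mu * v1 5 + eta * v0 1)
    (e2b : (eta + lam - s) * v1 2 = mu * pi 5 + eta * pi 1)
    (e3a : ∀ k, 2 ≤ k → k ≤ B - 1 →
      (eta + lam - s) * v0 (2 * k) = mu * v1 (2 * k + 3) + eta * v0 (2 * k - 2))
    (e3b : ∀ k, 2 ≤ k → k ≤ B - 1 →
      (eta + lam - s) * v1 (2 * k) = mu * pi (2 * k + 3) + eta * pi (2 * k - 2))
    (e4a : (lam - s) * v0 (2 * B) = eta * v0 (2 * B - 2))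
    (e4b : (lam - s) * v1 (2 * B) = eta * pi (2 * B - 2))
    (e5a : ∀ k, 1 ≤ k → k ≤ B → (mu - s) * v0 (2 * k + 1) = lam * v0 (2 * k))
    (e5b : ∀ k, 1 ≤ k → k ≤ B → (mu - s) * v1 (2 * k + 1) = lam * pi (2 * k)) :
    ∑ q ∈ Finset.Icc 1 (2 * B + 1), v0 q =
      rho * pi1 * (sbar ^ 2 * theta - sbar * theta * (1 + rho + beta)
          + beta * (1 + theta + theta * rho))
        / ((1 - sbar) ^ 2 * (rho - sbar) * (beta - sbar)) := by
  rw [lt_min_iff, lt_min_iff] at hs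
  obtain ⟨hs1, hs2, hs3⟩ := hs
  have hmu0 : mu ≠ 0 := ne_of_gt hmu
  have hlam0 : lam ≠ 0 := ne_of_gt hlam
  have heta0 : eta ≠ 0 := ne_of_gt heta
  have hsmu : s < mu := by rw [hsbar, div_lt_one hmu] at hs1; exact hs1
  have hslam : s < lam := by
    rw [hsbar, hrho, div_lt_div_iff₀ hmu hmu] at hs2; nlinarith
  have hseta : s < eta := by
    rw [hsbar, hbeta, div_lt_div_iff₀ hmu hmu] at hs3; nlinarith
  have hmus : mu - s ≠ 0 := ne_of_gt (by linarith)
  have hlams : lam - s ≠ 0 := ne_of_gt (by linarith)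
  have hetas : eta - s ≠ 0 := ne_of_gt (by linarith)
  have hels : eta + lam - s ≠ 0 := ne_of_gt (by linarith)
  obtain ⟨x, hxdef⟩ : ∃ x : ℝ, x = eta / lam := ⟨_, rfl⟩
  have hx0 : x ≠ 0 := by rw [hxdef]; exact div_ne_zero heta0 hlam0
  have hbr : beta / rho = x := by rw [hrho, hbeta, hxdef]; field_simp
  have hlx : lam * x = eta := by rw [hxdef]; field_simp
  -- closed form for v1 at odd indices
  have hv1 : ∀ k, 1 ≤ k → k ≤ B → v1 (2 * k + 1) = lam * (x ^ k * pi1) / (mu - s) := by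
    intro k h1 h2
    have h := e5b k h1 h2
    rw [hpeven k h1 h2, hbr] at h
    rw [eq_div_iff hmus]
    linear_combination h
  obtain ⟨c0, hc0⟩ : ∃ c : ℝ, c = mu * eta * pi1 / ((eta - s) * (mu - s)) := ⟨_, rfl⟩
  have hc0' : c0 * ((eta - s) * (mu - s)) = mu * eta * pi1 := by
    rw [hc0]; field_simp
  have hv01 : v0 1 = c0 := by
    have h3 := hv1 1 le_rfl (by omega)
    rw [show (3:ℕ) = 2 * 1 + 1 from rfl, h3] at e1a
    apply mul_right_cancel₀ (mul_ne_zero hetas hmus)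
    rw [hc0']
    field_simp at e1a
    linear_combination e1a + mu * pi1 * hlx
  -- the key step identity
  have hstep : ∀ n : ℕ, (eta + lam - s) * (c0 * x ^ (n + 1))
      = mu * (lam * (x ^ (n + 2) * pi1) / (mu - s)) + eta * (c0 * x ^ n) := by
    intro n
    have hm : (eta + lam - s) * (c0 * x ^ (n + 1)) * (mu - s)
        = mu * (lam * (x ^ (n + 2) * pi1)) + eta * (c0 * x ^ n) * (mu - s) := by
      linear_combination x ^ (n + 1) * hc0' + c0 * (mu - s) * x ^ n * hlx
        - mu * pi1 * x ^ (n + 1) * hlx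
    field_simp
    linear_combination hm
  have hv0even : ∀ k, 1 ≤ k → k ≤ B - 1 → v0 (2 * k) = c0 * x ^ k := by
    intro k
    induction k with
    | zero => omega
    | succ n ih =>
      intro h1 h2
      rcases Nat.eq_zero_or_pos n with hn | hn
      · subst hn
        have h5 := hv1 2 (by omega) (by omega)
        rw [show (5:ℕ) = 2 * 2 + 1 from rfl, h5, hv01] at e2a
        have hst := hstep 0
        norm_num at hst
        have h2' : v0 2 = c0 * x := mul_left_cancel₀ hels (e2a.trans hst.symm)
        simpa using h2'
      · have hih := ih (by omega) (by omega)
        have h := e3a (n + 1) (by omega) (by omega)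
        have h5 := hv1 (n + 2) (by omega) (by omega)
        rw [show 2 * (n + 1) + 3 = 2 * (n + 2) + 1 from by ring,
          show 2 * (n + 1) - 2 = 2 * n from by omega] at h
        rw [h5, hih] at h
        exact mul_left_cancel₀ hels (h.trans (hstep n).symm)
  -- top value
  have hpowB : lam * x ^ B = eta * x ^ (B - 1) := by
    have hxx : x ^ B = x ^ (B - 1) * x := by rw [← pow_succ]; congr 1; omega
    rw [hxx]; linear_combination x ^ (B - 1) * hlx
  have hv2B : v0 (2 * B) = lam * c0 * x ^ B / (lam - s) := by
    have hBm1 : v0 (2 * (B - 1)) = c0 * x ^ (B - 1) :=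
      hv0even (B - 1) (by omega) (by omega)
    rw [show 2 * B - 2 = 2 * (B - 1) from by omega, hBm1] at e4a
    rw [eq_div_iff hlams]
    linear_combination e4a - c0 * hpowB
  -- assemble the sum
  rw [sum_pair, hv01]
  have hsum2 : ∑ k ∈ Finset.Icc 1 B, (v0 (2 * k) + v0 (2 * k + 1))
      = (1 + lam / (mu - s)) * ∑ k ∈ Finset.Icc 1 B, v0 (2 * k) := by
    rw [Finset.mul_sum]
    apply Finset.sum_congr rfl
    intro k hk
    rw [Finset.mem_Icc] at hk
    have h := e5a k hk.1 hk.2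
    have hodd : v0 (2 * k + 1) = lam * v0 (2 * k) / (mu - s) := by
      rw [eq_div_iff hmus]; linear_combination h
    rw [hodd]; field_simp
  have hsplit : ∑ k ∈ Finset.Icc 1 B, v0 (2 * k)
      = c0 * (∑ k ∈ Finset.Icc 1 (B - 1), x ^ k) + lam * c0 * x ^ B / (lam - s) := by
    have htop : ∑ k ∈ Finset.Icc 1 ((B - 1) + 1), v0 (2 * k)
        = ∑ k ∈ Finset.Icc 1 (B - 1), v0 (2 * k) + v0 (2 * ((B - 1) + 1)) :=
      Finset.sum_Icc_succ_top (by omega) _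
    rw [show (B - 1) + 1 = B from by omega] at htop
    rw [htop, hv2B, Finset.mul_sum]
    congr 1
    apply Finset.sum_congr rfl
    intro k hk
    rw [Finset.mem_Icc] at hk
    rw [hv0even k hk.1 hk.2]
  -- geometric sum equals theta
  have hth : ∑ k ∈ Finset.Icc 1 B, x ^ k = theta := by
    by_cases hrb : rho = beta
    · have hel : lam = eta := by
        rw [hrho, hbeta, div_eq_div_iff hmu0 hmu0] at hrb
        exact mul_right_cancel₀ hmu0 hrb
      have hx1 : x = 1 := by rw [hxdef, ← hel, div_self hlam0]
      rw [htheta, if_pos hrb, hx1]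
      simp [Nat.card_Icc]
    · have hx1 : x ≠ 1 := by
        intro hx1
        apply hrb
        have hel : eta = lam := by
          have := hlx; rw [hx1, mul_one] at this; exact this.symm
        rw [hrho, hbeta, hel]
      have hbmr : beta - rho ≠ 0 := sub_ne_zero.mpr (fun h => hrb h.symm)
      have hxm1 : x - 1 ≠ 0 := sub_ne_zero.mpr hx1
      have hlamne : eta - lam ≠ 0 := by
        intro h
        exact hx1 (by rw [hxdef, sub_eq_zero] at *; rw [h, div_self hlam0])
      rw [geom_icc x hx1, htheta, if_neg hrb, hrho, hbeta, hxdef]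
      rw [div_pow, div_pow, div_pow]
      have hlamB : lam ^ B ≠ 0 := pow_ne_zero _ hlam0
      have hmuB : mu ^ B ≠ 0 := pow_ne_zero _ hmu0
      have hxm1' : eta / lam - 1 ≠ 0 := by rw [← hxdef]; exact hxm1
      have hbmr' : eta / mu - lam / mu ≠ 0 := by rw [← hbeta, ← hrho]; exact hbmr
      field_simp
  have hgeom : ∑ k ∈ Finset.Icc 1 (B - 1), x ^ k = theta - x ^ B := by
    have htop : ∑ k ∈ Finset.Icc 1 ((B - 1) + 1), x ^ k
        = ∑ k ∈ Finset.Icc 1 (B - 1), x ^ k + x ^ ((B - 1) + 1) :=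
      Finset.sum_Icc_succ_top (by omega) _
    rw [show (B - 1) + 1 = B from by omega] at htop
    rw [htop] at hth
    linarith
  -- key identity for x^B
  have hbeta0 : beta ≠ 0 := by rw [hbeta]; exact div_ne_zero heta0 hmu0
  have hrho0 : rho ≠ 0 := by rw [hrho]; exact div_ne_zero hlam0 hmu0
  have ht2 : (beta - rho) * theta = beta * (x ^ B - 1) := by
    by_cases hrb : rho = beta
    · have hx1 : x = 1 := by rw [← hbr, hrb, div_self hbeta0]
      rw [hrb, hx1, one_pow]; ring
    · have hbmr : beta - rho ≠ 0 := sub_ne_zero.mpr (fun h => hrb h.symm)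
      have hrhoB : rho ^ B ≠ 0 := pow_ne_zero _ hrho0
      rw [htheta, if_neg hrb, show x = beta / rho from hbr.symm, div_pow]
      field_simp
  have hy : x ^ B = ((beta - rho) * theta + beta) / beta := by
    rw [eq_div_iff hbeta0]; linear_combination -ht2
  rw [hsum2, hsplit, hgeom, hy]
  rw [hc0, hrho, hbeta, hsbar]
  have h1s : (1 : ℝ) - s / mu ≠ 0 := by
    rw [← div_self hmu0, div_sub_div_same]; exact div_ne_zero hmus hmu0
  have hrs : lam / mu - s / mu ≠ 0 := by
    rw [div_sub_div_same]; exact div_ne_zero hlams hmu0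
  have hbs : eta / mu - s / mu ≠ 0 := by
    rw [div_sub_div_same]; exact div_ne_zero hetas hmu0
  have hbmr0 : eta / mu ≠ 0 := div_ne_zero heta0 hmu0
  field_simp
  ring
end

section
/- The function M is differentiable at 0 and (1/μ)·M′(0) equals: (2Bρ² + 2(1+B)ρ + B + 2) / (μ·(Bρ² + (1+B)ρ)) if ρ = β, and (β^{B+2}(2ρ²+2ρ+1) − ρ^{B+2}(2β²+2β+1)) / (μ·(β^{B+2}(ρ²+ρ) − ρ^{B+2}(β²+β))) if ρ ≠ β. -/
/-!
By the quotient rule, `M'(0)` is an explicit rational function of `ρ, β, θ, π₁`. In both cases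
`π₁ = 1 / (1 + θ (1 + ρ))`, which turns `M'(0)` into a rational function `aoiMean ρ β θ` of
`ρ, β, θ` alone. For `ρ = β` one substitutes `θ = B`; for `ρ ≠ β` the numerator and denominator
of the claimed closed form are `ρ^B (β - ρ)` times those of `aoiMean ρ β θ`, because
`θ ρ^B (β - ρ) = β (β^B - ρ^B)`.
-/

theorem hasDerivAt_quadratic_zero (c p q r : ℝ) :
    HasDerivAt (fun x : ℝ => c * (x ^ 2 * p - x * p * q + r)) (-(c * p * q)) 0 := by
  have h := ((((hasDerivAt_pow 2 (0 : ℝ)).mul_const p).sub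
    (((hasDerivAt_id (0 : ℝ)).mul_const p).mul_const q)).add_const r).const_mul c
  exact h.congr_deriv (by simp; ring)

theorem hasDerivAt_one_sub_sq_mul_sub_mul_sub (a b : ℝ) :
    HasDerivAt (fun x : ℝ => (1 - x) ^ 2 * (a - x) * (b - x)) (-(2 * a * b + a + b)) 0 := by
  have h1 := ((hasDerivAt_id (0 : ℝ)).const_sub 1).pow 2
  have h2 := (hasDerivAt_id (0 : ℝ)).const_sub a
  have h3 := (hasDerivAt_id (0 : ℝ)).const_sub b
  exact ((h1.mul h2).mul h3).congr_deriv (by simp; ring)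

theorem HasDerivAt.div_one_sub_sq_mul_sub_mul_sub {f : ℝ → ℝ} {f' a b : ℝ}
    (hf : HasDerivAt f f' 0) (ha : a ≠ 0) (hb : b ≠ 0) :
    HasDerivAt (fun x => f x / ((1 - x) ^ 2 * (a - x) * (b - x)))
      ((f' * (a * b) + f 0 * (2 * a * b + a + b)) / (a * b) ^ 2) 0 := by
  have hg0 : (1 - 0 : ℝ) ^ 2 * (a - 0) * (b - 0) ≠ 0 := by simp [ha, hb]
  exact (hf.div (hasDerivAt_one_sub_sq_mul_sub_mul_sub a b) hg0).congr_deriv (by simp; ring)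

noncomputable def aoiMean (ρ β θ : ℝ) : ℝ :=
  ((1 + θ + θ * ρ) * (2 * ρ * β + ρ + β) - θ * ρ * (1 + ρ + β)) / (ρ * β * (1 + θ * (1 + ρ)))

theorem aoiMean_self {ρ : ℝ} (hρ : ρ ≠ 0) (B : ℕ) :
    aoiMean ρ ρ B = (2 * B * ρ ^ 2 + 2 * (1 + B) * ρ + B + 2) / (B * ρ ^ 2 + (1 + B) * ρ) := by
  unfold aoiMean
  field_simp
  ring

theorem aoiMean_of_mul_eq {ρ β θ : ℝ} (B : ℕ) (hc : ρ ^ B * (β - ρ) ≠ 0)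
    (hθ : θ * (ρ ^ B * (β - ρ)) = β * (β ^ B - ρ ^ B)) :
    aoiMean ρ β θ =
      (β ^ (B + 2) * (2 * ρ ^ 2 + 2 * ρ + 1) - ρ ^ (B + 2) * (2 * β ^ 2 + 2 * β + 1))
        / (β ^ (B + 2) * (ρ ^ 2 + ρ) - ρ ^ (B + 2) * (β ^ 2 + β)) := by
  have hnum : β ^ (B + 2) * (2 * ρ ^ 2 + 2 * ρ + 1) - ρ ^ (B + 2) * (2 * β ^ 2 + 2 * β + 1)
      = ρ ^ B * (β - ρ) * ((1 + θ + θ * ρ) * (2 * ρ * β + ρ + β) - θ * ρ * (1 + ρ + β)) := by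
    linear_combination (-(β * (2 * ρ ^ 2 + 2 * ρ + 1))) * hθ
  have hden : β ^ (B + 2) * (ρ ^ 2 + ρ) - ρ ^ (B + 2) * (β ^ 2 + β)
      = ρ ^ B * (β - ρ) * (ρ * β * (1 + θ * (1 + ρ))) := by
    linear_combination (-(ρ * β * (1 + ρ))) * hθ
  rw [hnum, hden, mul_div_mul_left _ _ hc, aoiMean]

theorem stmt_3_general (rho beta mu : ℝ) (hrho : 0 < rho) (hbeta : 0 < beta)
    (B : ℕ)
    (theta pi1 : ℝ)
    (htheta : theta = if rho = beta then (B : ℝ)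
      else beta * (beta ^ B - rho ^ B) / (rho ^ B * (beta - rho)))
    (hpi1 : pi1 = if rho = beta then 1 / (1 + (B : ℝ) * (1 + rho))
      else rho ^ B * (beta - rho) /
        (rho ^ B * (beta - rho) + beta * (1 + rho) * (beta ^ B - rho ^ B)))
    (M : ℝ → ℝ)
    (hM : ∀ x, M x = rho * pi1 * (x ^ 2 * theta - x * theta * (1 + rho + beta)
        + beta * (1 + theta + theta * rho))
      / ((1 - x) ^ 2 * (rho - x) * (beta - x))) :
    DifferentiableAt ℝ M 0 ∧
    (1 / mu) * deriv M 0 =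
      if rho = beta then
        (2 * (B : ℝ) * rho ^ 2 + 2 * (1 + (B : ℝ)) * rho + (B : ℝ) + 2)
          / (mu * ((B : ℝ) * rho ^ 2 + (1 + (B : ℝ)) * rho))
      else
        (beta ^ (B + 2) * (2 * rho ^ 2 + 2 * rho + 1)
            - rho ^ (B + 2) * (2 * beta ^ 2 + 2 * beta + 1))
          / (mu * (beta ^ (B + 2) * (rho ^ 2 + rho) - rho ^ (B + 2) * (beta ^ 2 + beta))) := by
  have hc : rho ≠ beta → rho ^ B * (beta - rho) ≠ 0 := fun h =>
    mul_ne_zero (by positivity) (sub_ne_zero.2 (Ne.symm h))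
  have hπ : pi1 = 1 / (1 + theta * (1 + rho)) := by
    rw [hpi1, htheta]
    split_ifs with h
    · ring
    · have := hc h
      field_simp
  have hD := (hasDerivAt_quadratic_zero (rho * pi1) theta (1 + rho + beta)
    (beta * (1 + theta + theta * rho))).div_one_sub_sq_mul_sub_mul_sub hrho.ne' hbeta.ne'
  rw [← funext hM] at hD
  refine ⟨hD.differentiableAt, ?_⟩
  have hmean : deriv M 0 = aoiMean rho beta theta := by
    rw [hD.deriv, hπ, aoiMean]
    field_simp
    ring
  rw [hmean, mul_comm mu, mul_comm mu, ← div_div, ← div_div, one_div_mul_eq_div]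
  split_ifs at htheta ⊢ with h
  · subst h htheta
    rw [aoiMean_self hrho.ne']
  · rw [aoiMean_of_mul_eq B (hc h) (by rw [htheta]; field_simp [hc h])]

/-- First moment of AoI for LCFS-NP (EH only when system is empty), from the MGF. -/
theorem stmt_3 (rho beta mu : ℝ) (hrho : 0 < rho) (hbeta : 0 < beta) (hmu : 0 < mu)
    (B : ℕ) (hB : 1 ≤ B)
    (theta pi1 : ℝ)
    (htheta : theta = if rho = beta then (B : ℝ)
      else beta * (beta ^ B - rho ^ B) / (rho ^ B * (beta - rho)))
    (hpi1 : pi1 = if rho = beta then 1 / (1 + (B : ℝ) * (1 + rho))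
      else rho ^ B * (beta - rho) /
        (rho ^ B * (beta - rho) + beta * (1 + rho) * (beta ^ B - rho ^ B)))
    (M : ℝ → ℝ)
    (hM : ∀ x, M x = rho * pi1 * (x ^ 2 * theta - x * theta * (1 + rho + beta)
        + beta * (1 + theta + theta * rho))
      / ((1 - x) ^ 2 * (rho - x) * (beta - x))) :
    DifferentiableAt ℝ M 0 ∧
    (1 / mu) * deriv M 0 =
      if rho = beta then
        (2 * (B : ℝ) * rho ^ 2 + 2 * (1 + (B : ℝ)) * rho + (B : ℝ) + 2)
          / (mu * ((B : ℝ) * rho ^ 2 + (1 + (B : ℝ)) * rho))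
      else
        (beta ^ (B + 2) * (2 * rho ^ 2 + 2 * rho + 1)
            - rho ^ (B + 2) * (2 * beta ^ 2 + 2 * beta + 1))
          / (mu * (beta ^ (B + 2) * (rho ^ 2 + rho) - rho ^ (B + 2) * (beta ^ 2 + beta))) :=
  stmt_3_general rho beta mu hrho hbeta B theta pi1 htheta hpi1 M hM
end

section
/- The function M is twice differentiable at 0 and (1/μ²)·M″(0) equals: 2(3Bρ³ + (3B+3)ρ² + (2B+4)ρ + B + 3) / (μ²ρ²(1 + B + Bρ)) if ρ = β, and 2(β^{B+3}(3ρ³+3ρ²+2ρ+1) − ρ^{B+3}(3β³+3β²+2β+1)) / (μ²·(β^{B+3}ρ²(1+ρ) − ρ^{B+3}β²(β+1))) if ρ ≠ β. -/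
/-!
`M` is the quotient of two polynomials whose denominator takes the value `ρβ ≠ 0` at `0`, so its
second derivative at `0` is given by the second-order quotient rule in terms of the values and the
first two derivatives of numerator and denominator there. Substituting `θ` and `π₁` is then field
arithmetic. For `ρ ≠ β` the only nontrivial point is that the normalizing constant
`Z = ρ^B (β - ρ) + β (1 + ρ) (β^B - ρ^B)` of `π₁` does not vanish, since `β - ρ` and `β^B - ρ^B`
never have opposite signs; the denominator of the claimed formula is `ρ²β² Z`.
-/

open Polynomial Filter Topology

theorem hasDerivAt_deriv_div {𝕜 : Type*} [NontriviallyNormedField 𝕜] {n d n' d' : 𝕜 → 𝕜}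
    {x n'' d'' : 𝕜} (hn : ∀ᶠ y in 𝓝 x, HasDerivAt n (n' y) y)
    (hd : ∀ᶠ y in 𝓝 x, HasDerivAt d (d' y) y) (hn' : HasDerivAt n' n'' x)
    (hd' : HasDerivAt d' d'' x) (hx : d x ≠ 0) :
    HasDerivAt (deriv fun y => n y / d y)
      (((n'' * d x - n x * d'') * d x - 2 * d' x * (n' x * d x - n x * d' x)) / d x ^ 3) x := by
  have hdx := hd.self_of_nhds
  have hd_ne : ∀ᶠ y in 𝓝 x, d y ≠ 0 := hdx.continuousAt.eventually_ne hx
  have hderiv : deriv (fun y => n y / d y) =ᶠ[𝓝 x] fun y => (n' y * d y - n y * d' y) / d y ^ 2 :=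
    (hn.and (hd.and hd_ne)).mono fun y ⟨hny, hdy, hy⟩ => (hny.div hdy hy).deriv
  have h := ((hn'.mul hdx).sub (hn.self_of_nhds.mul hd')).div (hdx.pow 2) (pow_ne_zero 2 hx)
  refine (h.congr_deriv ?_).congr_of_eventuallyEq hderiv
  simp only [Pi.sub_apply, Pi.mul_apply, Pi.pow_apply]
  field_simp
  ring

theorem Polynomial.hasDerivAt_deriv_eval_div {𝕜 : Type*} [NontriviallyNormedField 𝕜]
    (p q : 𝕜[X]) {x : 𝕜} (hx : q.eval x ≠ 0) :
    HasDerivAt (deriv fun y => p.eval y / q.eval y)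
      (((p.derivative.derivative.eval x * q.eval x - p.eval x * q.derivative.derivative.eval x)
          * q.eval x
        - 2 * q.derivative.eval x
          * (p.derivative.eval x * q.eval x - p.eval x * q.derivative.eval x))
        / q.eval x ^ 3) x :=
  hasDerivAt_deriv_div (.of_forall p.hasDerivAt) (.of_forall q.hasDerivAt)
    (p.derivative.hasDerivAt x) (q.derivative.hasDerivAt x) hx

theorem aoi_mgf_hasDerivAt_deriv {rho beta theta c : ℝ} {M : ℝ → ℝ} (hrho : rho ≠ 0)
    (hbeta : beta ≠ 0)
    (hM : ∀ x, M x = c * (x ^ 2 * theta - x * theta * (1 + rho + beta)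
        + beta * (1 + theta + theta * rho)) / ((1 - x) ^ 2 * (rho - x) * (beta - x))) :
    DifferentiableAt ℝ M 0 ∧ HasDerivAt (deriv M)
      (2 * c * (theta * rho ^ 2 * beta ^ 2
        - beta * (1 + theta + theta * rho) * rho * beta * (1 + 2 * rho + 2 * beta + rho * beta)
        - rho * beta * theta * (1 + rho + beta) * (rho + beta + 2 * rho * beta)
        + beta * (1 + theta + theta * rho) * (rho + beta + 2 * rho * beta) ^ 2)
        / (rho * beta) ^ 3) 0 := by
  set p : ℝ[X] := C c * (C theta * X ^ 2 - C (theta * (1 + rho + beta)) * X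
    + C (beta * (1 + theta + theta * rho)))
  set q : ℝ[X] := (1 - X) ^ 2 * (C rho - X) * (C beta - X)
  have hMpq : M = fun x => p.eval x / q.eval x := by
    funext x
    simp [p, q, hM]
    ring
  have hq : q.eval 0 ≠ 0 := by simp [q, hrho, hbeta]
  have hM2 := p.hasDerivAt_deriv_eval_div q hq
  rw [← hMpq] at hM2
  refine ⟨hMpq ▸ p.differentiableAt.div q.differentiableAt hq, hM2.congr_deriv ?_⟩
  simp [p, q, derivative_pow]
  ring

theorem sub_mul_pow_sub_pow_nonneg {a b : ℝ} (ha : 0 ≤ a) (hb : 0 ≤ b) (k : ℕ) :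
    0 ≤ (b - a) * (b ^ k - a ^ k) := by
  rcases le_total a b with h | h
  · exact mul_nonneg (sub_nonneg.2 h) (sub_nonneg.2 (pow_le_pow_left₀ ha h k))
  · exact mul_nonneg_of_nonpos_of_nonpos (sub_nonpos.2 h) (sub_nonpos.2 (pow_le_pow_left₀ hb h k))

theorem pow_mul_sub_add_mul_pow_sub_pow_ne_zero {a b c : ℝ} (ha : 0 < a) (hb : 0 ≤ b)
    (hab : a ≠ b) (hc : 0 ≤ c) (k : ℕ) :
    a ^ k * (b - a) + c * (b ^ k - a ^ k) ≠ 0 := by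
  refine right_ne_zero_of_mul (a := b - a) (ne_of_gt ?_)
  rw [show (b - a) * (a ^ k * (b - a) + c * (b ^ k - a ^ k))
    = a ^ k * (b - a) ^ 2 + c * ((b - a) * (b ^ k - a ^ k)) by ring]
  exact add_pos_of_pos_of_nonneg (by positivity)
    (mul_nonneg hc (sub_mul_pow_sub_pow_nonneg ha.le hb k))

theorem stmt_4_general (rho beta mu : ℝ) (hrho : 0 < rho) (hbeta : 0 < beta)
    (B : ℕ)
    (theta pi1 : ℝ)
    (htheta : theta = if rho = beta then (B : ℝ)
      else beta * (beta ^ B - rho ^ B) / (rho ^ B * (beta - rho)))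
    (hpi1 : pi1 = if rho = beta then 1 / (1 + (B : ℝ) * (1 + rho))
      else rho ^ B * (beta - rho) /
        (rho ^ B * (beta - rho) + beta * (1 + rho) * (beta ^ B - rho ^ B)))
    (M : ℝ → ℝ)
    (hM : ∀ x, M x = rho * pi1 * (x ^ 2 * theta - x * theta * (1 + rho + beta)
        + beta * (1 + theta + theta * rho))
      / ((1 - x) ^ 2 * (rho - x) * (beta - x))) :
    DifferentiableAt ℝ M 0 ∧ DifferentiableAt ℝ (deriv M) 0 ∧
    (1 / mu ^ 2) * deriv (deriv M) 0 =
      if rho = beta then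
        2 * (3 * (B : ℝ) * rho ^ 3 + (3 * (B : ℝ) + 3) * rho ^ 2
            + (2 * (B : ℝ) + 4) * rho + (B : ℝ) + 3)
          / (mu ^ 2 * rho ^ 2 * (1 + (B : ℝ) + (B : ℝ) * rho))
      else
        2 * (beta ^ (B + 3) * (3 * rho ^ 3 + 3 * rho ^ 2 + 2 * rho + 1)
            - rho ^ (B + 3) * (3 * beta ^ 3 + 3 * beta ^ 2 + 2 * beta + 1))
          / (mu ^ 2 * (beta ^ (B + 3) * rho ^ 2 * (1 + rho)
            - rho ^ (B + 3) * beta ^ 2 * (beta + 1))) := by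
  obtain ⟨hM1, hM2⟩ := aoi_mgf_hasDerivAt_deriv hrho.ne' hbeta.ne' hM
  refine ⟨hM1, hM2.differentiableAt, ?_⟩
  rw [hM2.deriv]
  split_ifs at htheta hpi1 ⊢ with hrb
  · subst hrb htheta hpi1
    field_simp
    ring
  · have hZ := pow_mul_sub_add_mul_pow_sub_pow_ne_zero hrho hbeta.le hrb
      (by positivity : 0 ≤ beta * (1 + rho)) B
    rw [show beta ^ (B + 3) * rho ^ 2 * (1 + rho) - rho ^ (B + 3) * beta ^ 2 * (beta + 1)
      = rho ^ 2 * beta ^ 2 * (rho ^ B * (beta - rho) + beta * (1 + rho) * (beta ^ B - rho ^ B))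
      by ring]
    subst htheta hpi1
    field_simp
    ring

/-- Second moment of AoI for LCFS-NP (EH only when system is empty), from the MGF. -/
theorem stmt_4 (rho beta mu : ℝ) (hrho : 0 < rho) (hbeta : 0 < beta) (hmu : 0 < mu)
    (B : ℕ) (hB : 1 ≤ B)
    (theta pi1 : ℝ)
    (htheta : theta = if rho = beta then (B : ℝ)
      else beta * (beta ^ B - rho ^ B) / (rho ^ B * (beta - rho)))
    (hpi1 : pi1 = if rho = beta then 1 / (1 + (B : ℝ) * (1 + rho))
      else rho ^ B * (beta - rho) /
        (rho ^ B * (beta - rho) + beta * (1 + rho) * (beta ^ B - rho ^ B)))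
    (M : ℝ → ℝ)
    (hM : ∀ x, M x = rho * pi1 * (x ^ 2 * theta - x * theta * (1 + rho + beta)
        + beta * (1 + theta + theta * rho))
      / ((1 - x) ^ 2 * (rho - x) * (beta - x))) :
    DifferentiableAt ℝ M 0 ∧ DifferentiableAt ℝ (deriv M) 0 ∧
    (1 / mu ^ 2) * deriv (deriv M) 0 =
      if rho = beta then
        2 * (3 * (B : ℝ) * rho ^ 3 + (3 * (B : ℝ) + 3) * rho ^ 2
            + (2 * (B : ℝ) + 4) * rho + (B : ℝ) + 3)
          / (mu ^ 2 * rho ^ 2 * (1 + (B : ℝ) + (B : ℝ) * rho))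
      else
        2 * (beta ^ (B + 3) * (3 * rho ^ 3 + 3 * rho ^ 2 + 2 * rho + 1)
            - rho ^ (B + 3) * (3 * beta ^ 3 + 3 * beta ^ 2 + 2 * beta + 1))
          / (mu ^ 2 * (beta ^ (B + 3) * rho ^ 2 * (1 + rho)
            - rho ^ (B + 3) * beta ^ 2 * (beta + 1))) :=
  stmt_4_general rho beta mu hrho hbeta B theta pi1 htheta hpi1 M hM
end

section
/- Define F(x, y) = 2(y^{B+3}(3x³+3x²+2x+1) − x^{B+3}(3y³+3y²+2y+1)) / (μ²·(y^{B+3}x²(1+x) − x^{B+3}y²(y+1))) for positive reals x ≠ y. Then for all ρ, β > 0 with ρ ≠ β, F(ρ, β) = F(β, ρ); i.e., the second moment of AoI under the LCFS-NP discipline is invariant to exchanging the server utilization ρ and the energy utilization β. -/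
/-- The second moment of AoI under LCFS-NP (EH only when system is empty, ρ ≠ β)
is invariant to exchanging the server utilization ρ and the energy utilization β. -/
theorem stmt_6 (mu : ℝ) (hmu : 0 < mu) (B : ℕ) (hB : 1 ≤ B)
    (F : ℝ → ℝ → ℝ)
    (hF : ∀ x y : ℝ, F x y =
      2 * (y ^ (B + 3) * (3 * x ^ 3 + 3 * x ^ 2 + 2 * x + 1)
          - x ^ (B + 3) * (3 * y ^ 3 + 3 * y ^ 2 + 2 * y + 1))
        / (mu ^ 2 * (y ^ (B + 3) * x ^ 2 * (1 + x) - x ^ (B + 3) * y ^ 2 * (y + 1)))) :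
    ∀ rho beta : ℝ, 0 < rho → 0 < beta → rho ≠ beta → F rho beta = F beta rho := by
  intro rho beta _ _ _
  rw [hF, hF, ← neg_div_neg_eq]
  congr 1 <;> ring
end

section
/- The function M is twice differentiable at 0 and (1/μ²)·M″(0) equals: 2(Bρ⁵ + (4B+1)ρ⁴ + (7B+5)ρ³ + (7B+12)ρ² + (4B+10)ρ + B + 3) / (μ²ρ²(1+ρ)²(1 + B + Bρ)) if ρ = β, and (2β^{B+3}(1+ρ)³(1+ρ+ρ²) − 2ρ^{B+3}((β³+β²+β)(ρ²+3ρ+2) + β³ + β² + (1+ρ)²)) / (μ²(1+ρ)²(β^{B+3}ρ²(1+ρ) − ρ^{B+3}β²(1+β))) if ρ ≠ β. -/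
/-!
`M = P / Q` is a rational function with `Q(0) = ρ(1+ρ)β ≠ 0`, so `M''(0)` follows from the
quotient rule and the Taylor coefficients of `P` and `Q` at `0`. As `Q = ∏ (a - x)` over the poles
`a ∈ {1, ρ, 1+ρ, β}`, logarithmic differentiation writes the result through `Σ 1/a` and `Σ 1/a²`,
uniformly in `θ` and `π₁`. Substituting `θ` and `π₁` is then rational algebra; for `ρ ≠ β` the
denominators do not vanish because `(aⁿ - bⁿ)(a - b) ≥ 0` for `a, b ≥ 0`, strictly if `a ≠ b`
and `n ≠ 0`.
-/

open Filter Topology Polynomial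

section SecondDerivDiv

variable {𝕜 : Type*} [NontriviallyNormedField 𝕜] {p q p' q' : 𝕜 → 𝕜} {p'' q'' x : 𝕜}

theorem hasDerivAt_deriv_div_s11 (hp : ∀ᶠ y in 𝓝 x, HasDerivAt p (p' y) y)
    (hq : ∀ᶠ y in 𝓝 x, HasDerivAt q (q' y) y) (hp' : HasDerivAt p' p'' x)
    (hq' : HasDerivAt q' q'' x) (hx : q x ≠ 0) :
    HasDerivAt (deriv fun y => p y / q y)
      ((p'' * q x ^ 2 - 2 * p' x * q' x * q x - p x * q'' * q x + 2 * p x * q' x ^ 2)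
        / q x ^ 3) x := by
  have hq_ne : ∀ᶠ y in 𝓝 x, q y ≠ 0 := hq.self_of_nhds.continuousAt.eventually_ne hx
  have hderiv : (deriv fun y => p y / q y) =ᶠ[𝓝 x] fun y => (p' y * q y - p y * q' y) / q y ^ 2 :=
    (hp.and (hq.and hq_ne)).mono fun y ⟨hpy, hqy, hy⟩ => (hpy.div hqy hy).deriv
  refine HasDerivAt.congr_of_eventuallyEq ?_ hderiv
  refine (((hp'.fun_mul hq.self_of_nhds).fun_sub (hp.self_of_nhds.fun_mul hq')).fun_div
    (hq.self_of_nhds.fun_pow 2) (pow_ne_zero 2 hx)).congr_deriv ?_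
  field_simp
  ring

theorem Polynomial.hasDerivAt_deriv_eval_div_s11 (P Q : 𝕜[X]) (hx : Q.eval x ≠ 0) :
    HasDerivAt (deriv fun y => P.eval y / Q.eval y)
      ((P.derivative.derivative.eval x * Q.eval x ^ 2
        - 2 * P.derivative.eval x * Q.derivative.eval x * Q.eval x
        - P.eval x * Q.derivative.derivative.eval x * Q.eval x
        + 2 * P.eval x * Q.derivative.eval x ^ 2) / Q.eval x ^ 3) x :=
  hasDerivAt_deriv_div_s11 (p' := fun y => P.derivative.eval y) (q' := fun y => Q.derivative.eval y)
    (.of_forall P.hasDerivAt) (.of_forall Q.hasDerivAt)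
    (P.derivative.hasDerivAt x) (Q.derivative.hasDerivAt x) hx

end SecondDerivDiv

section PowSubPow

variable {R : Type*} [CommRing R] [LinearOrder R] [IsStrictOrderedRing R]

theorem pow_sub_pow_mul_sub_nonneg {a b : R} (ha : 0 ≤ a) (hb : 0 ≤ b) (n : ℕ) :
    0 ≤ (a ^ n - b ^ n) * (a - b) := by
  rcases le_total a b with h | h
  · exact mul_nonneg_of_nonpos_of_nonpos (sub_nonpos.2 (pow_le_pow_left₀ ha h n))
      (sub_nonpos.2 h)
  · exact mul_nonneg (sub_nonneg.2 (pow_le_pow_left₀ hb h n)) (sub_nonneg.2 h)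

theorem pow_sub_pow_mul_sub_pos {a b : R} (ha : 0 ≤ a) (hb : 0 ≤ b) (hab : a ≠ b) {n : ℕ}
    (hn : n ≠ 0) : 0 < (a ^ n - b ^ n) * (a - b) := by
  rcases hab.lt_or_gt with h | h
  · exact mul_pos_of_neg_of_neg (sub_neg.2 (pow_lt_pow_left₀ h ha hn)) (sub_neg.2 h)
  · exact mul_pos (sub_pos.2 (pow_lt_pow_left₀ h hb hn)) (sub_pos.2 h)

end PowSubPow

theorem aoiMGF_hasDerivAt_deriv_zero (rho beta theta pi1 : ℝ) (hrho : 0 < rho) (hbeta : 0 < beta)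
    (M : ℝ → ℝ)
    (hM : ∀ x, M x = rho * (1 + rho) * pi1 * (x ^ 2 * theta - x * theta * (1 + rho + beta)
        + beta * (1 + theta + theta * rho))
      / ((1 - x) * (rho - x) * (1 + rho - x) * (beta - x))) :
    DifferentiableAt ℝ M 0 ∧
    HasDerivAt (deriv M) (pi1 * (2 * theta / beta
      - 2 * theta * (1 + rho + beta) * (1 + rho⁻¹ + (1 + rho)⁻¹ + beta⁻¹) / beta
      + (1 + theta * (1 + rho)) * ((1 + rho⁻¹ + (1 + rho)⁻¹ + beta⁻¹) ^ 2
        + 1 + (rho ^ 2)⁻¹ + ((1 + rho) ^ 2)⁻¹ + (beta ^ 2)⁻¹))) 0 := by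
  set P : ℝ[X] := C (rho * (1 + rho) * pi1) *
    (X ^ 2 * C theta - X * C (theta * (1 + rho + beta)) + C (beta * (1 + theta + theta * rho)))
  set Q : ℝ[X] := (1 - X) * (C rho - X) * (C (1 + rho) - X) * (C beta - X)
  have hMPQ : M = fun x => P.eval x / Q.eval x := by
    funext x
    simp only [hM, P, Q, eval_mul, eval_sub, eval_add, eval_pow, eval_C, eval_X, eval_one]
    ring
  obtain ⟨hP0, hP1, hP2, hQ0, hQ1, hQ2⟩ :
      P.eval 0 = rho * (1 + rho) * pi1 * (beta * (1 + theta + theta * rho)) ∧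
      P.derivative.eval 0 = -(rho * (1 + rho) * pi1 * (theta * (1 + rho + beta))) ∧
      P.derivative.derivative.eval 0 = rho * (1 + rho) * pi1 * (2 * theta) ∧
      Q.eval 0 = rho * (1 + rho) * beta ∧
      Q.derivative.eval 0 =
        -(rho * (1 + rho) * beta + (1 + rho) * beta + rho * beta + rho * (1 + rho)) ∧
      Q.derivative.derivative.eval 0 =
        2 * ((1 + rho) * beta + rho * beta + rho * (1 + rho) + beta + (1 + rho) + rho) := by
    refine ⟨?_, ?_, ?_, ?_, ?_, ?_⟩ <;>
    simp only [P, Q, derivative_mul, derivative_add, derivative_sub, derivative_one,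
      derivative_C, derivative_X, derivative_X_sq, derivative_zero, eval_mul, eval_add, eval_sub,
      eval_pow, eval_one, eval_C, eval_X, eval_zero] <;>
    ring
  have hQ0_ne : Q.eval 0 ≠ 0 := by rw [hQ0]; positivity
  subst hMPQ
  refine ⟨P.differentiableAt.div Q.differentiableAt hQ0_ne, ?_⟩
  refine (P.hasDerivAt_deriv_eval_div_s11 Q hQ0_ne).congr_deriv ?_
  rw [hP0, hP1, hP2, hQ0, hQ1, hQ2]
  field_simp
  ring

theorem aoi_secondMoment_of_eq (rho mu B : ℝ) (hrho : 0 < rho) (hB : 0 ≤ B) :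
    1 / mu ^ 2 * (1 / (1 + B * (1 + rho)) * (2 * B / rho
      - 2 * B * (1 + rho + rho) * (1 + rho⁻¹ + (1 + rho)⁻¹ + rho⁻¹) / rho
      + (1 + B * (1 + rho)) * ((1 + rho⁻¹ + (1 + rho)⁻¹ + rho⁻¹) ^ 2
        + 1 + (rho ^ 2)⁻¹ + ((1 + rho) ^ 2)⁻¹ + (rho ^ 2)⁻¹))) =
      2 * (B * rho ^ 5 + (4 * B + 1) * rho ^ 4 + (7 * B + 5) * rho ^ 3
            + (7 * B + 12) * rho ^ 2 + (4 * B + 10) * rho + B + 3)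
          / (mu ^ 2 * rho ^ 2 * (1 + rho) ^ 2 * (1 + B + B * rho)) := by
  have h1 : 1 + B * (1 + rho) ≠ 0 := by positivity
  have h2 : 1 + B + B * rho ≠ 0 := by positivity
  rcases eq_or_ne mu 0 with rfl | hmu
  · simp
  field_simp
  ring

theorem aoi_secondMoment_of_ne (rho beta mu : ℝ) (hrho : 0 < rho) (hbeta : 0 < beta)
    (hne : rho ≠ beta) (B : ℕ) :
    1 / mu ^ 2 * (rho ^ B * (beta - rho) /
        (rho ^ B * (beta - rho) + beta * (1 + rho) * (beta ^ B - rho ^ B)) *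
      (2 * (beta * (beta ^ B - rho ^ B) / (rho ^ B * (beta - rho))) / beta
      - 2 * (beta * (beta ^ B - rho ^ B) / (rho ^ B * (beta - rho))) * (1 + rho + beta)
        * (1 + rho⁻¹ + (1 + rho)⁻¹ + beta⁻¹) / beta
      + (1 + beta * (beta ^ B - rho ^ B) / (rho ^ B * (beta - rho)) * (1 + rho))
        * ((1 + rho⁻¹ + (1 + rho)⁻¹ + beta⁻¹) ^ 2
          + 1 + (rho ^ 2)⁻¹ + ((1 + rho) ^ 2)⁻¹ + (beta ^ 2)⁻¹))) =
      (2 * beta ^ (B + 3) * (1 + rho) ^ 3 * (1 + rho + rho ^ 2)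
            - 2 * rho ^ (B + 3) * ((beta ^ 3 + beta ^ 2 + beta) * (rho ^ 2 + 3 * rho + 2)
              + beta ^ 3 + beta ^ 2 + (1 + rho) ^ 2))
          / (mu ^ 2 * (1 + rho) ^ 2 * (beta ^ (B + 3) * rho ^ 2 * (1 + rho)
            - rho ^ (B + 3) * beta ^ 2 * (1 + beta))) := by
  have hS : rho ^ B * (beta - rho) + beta * (1 + rho) * (beta ^ B - rho ^ B) ≠ 0 := by
    refine right_ne_zero_of_mul (a := beta - rho) (ne_of_gt ?_)
    have hsplit : (beta - rho) * (rho ^ B * (beta - rho) + beta * (1 + rho) * (beta ^ B - rho ^ B))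
        = rho ^ B * (beta - rho) ^ 2
          + beta * (1 + rho) * ((beta ^ B - rho ^ B) * (beta - rho)) := by ring
    rw [hsplit]
    exact add_pos_of_pos_of_nonneg (by positivity)
      (mul_nonneg (by positivity) (pow_sub_pow_mul_sub_nonneg hbeta.le hrho.le B))
  -- the denominator of the target divided by `β²ρ²`, in the shape `field_simp` needs
  have hT : beta * (1 + rho) * beta ^ B - rho ^ B * rho * (1 + beta) ≠ 0 := by
    refine right_ne_zero_of_mul (a := beta - rho) (ne_of_gt ?_)
    have hsplit : (beta - rho) * (beta * (1 + rho) * beta ^ B - rho ^ B * rho * (1 + beta))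
        = (beta ^ (B + 1) - rho ^ (B + 1)) * (beta - rho)
          + rho * beta * ((beta ^ B - rho ^ B) * (beta - rho)) := by ring
    rw [hsplit]
    exact add_pos_of_pos_of_nonneg
      (pow_sub_pow_mul_sub_pos hbeta.le hrho.le hne.symm B.succ_ne_zero)
      (mul_nonneg (by positivity) (pow_sub_pow_mul_sub_nonneg hbeta.le hrho.le B))
  rcases eq_or_ne mu 0 with rfl | hmu
  · simp
  rw [pow_add beta B 3, pow_add rho B 3]
  have hrB : rho ^ B ≠ 0 := by positivity
  generalize rho ^ B = a at hrB hS hT ⊢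
  generalize beta ^ B = b at hS hT ⊢
  field_simp
  ring

theorem stmt_11_general (rho beta mu : ℝ) (hrho : 0 < rho) (hbeta : 0 < beta)
    (B : ℕ)
    (theta pi1 : ℝ)
    (htheta : theta = if rho = beta then (B : ℝ)
      else beta * (beta ^ B - rho ^ B) / (rho ^ B * (beta - rho)))
    (hpi1 : pi1 = if rho = beta then 1 / (1 + (B : ℝ) * (1 + rho))
      else rho ^ B * (beta - rho) /
        (rho ^ B * (beta - rho) + beta * (1 + rho) * (beta ^ B - rho ^ B)))
    (M : ℝ → ℝ)
    (hM : ∀ x, M x = rho * (1 + rho) * pi1 * (x ^ 2 * theta - x * theta * (1 + rho + beta)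
        + beta * (1 + theta + theta * rho))
      / ((1 - x) * (rho - x) * (1 + rho - x) * (beta - x))) :
    DifferentiableAt ℝ M 0 ∧ DifferentiableAt ℝ (deriv M) 0 ∧
    (1 / mu ^ 2) * deriv (deriv M) 0 =
      if rho = beta then
        2 * ((B : ℝ) * rho ^ 5 + (4 * (B : ℝ) + 1) * rho ^ 4 + (7 * (B : ℝ) + 5) * rho ^ 3
            + (7 * (B : ℝ) + 12) * rho ^ 2 + (4 * (B : ℝ) + 10) * rho + (B : ℝ) + 3)
          / (mu ^ 2 * rho ^ 2 * (1 + rho) ^ 2 * (1 + (B : ℝ) + (B : ℝ) * rho))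
      else
        (2 * beta ^ (B + 3) * (1 + rho) ^ 3 * (1 + rho + rho ^ 2)
            - 2 * rho ^ (B + 3) * ((beta ^ 3 + beta ^ 2 + beta) * (rho ^ 2 + 3 * rho + 2)
              + beta ^ 3 + beta ^ 2 + (1 + rho) ^ 2))
          / (mu ^ 2 * (1 + rho) ^ 2 * (beta ^ (B + 3) * rho ^ 2 * (1 + rho)
            - rho ^ (B + 3) * beta ^ 2 * (1 + beta))) := by
  obtain ⟨hdiff, hM''⟩ := aoiMGF_hasDerivAt_deriv_zero rho beta theta pi1 hrho hbeta M hM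
  refine ⟨hdiff, hM''.differentiableAt, ?_⟩
  rw [hM''.deriv]
  split_ifs at htheta hpi1 ⊢ with hrb
  · subst hrb htheta hpi1
    exact aoi_secondMoment_of_eq rho mu B hrho B.cast_nonneg
  · subst htheta hpi1
    exact aoi_secondMoment_of_ne rho beta mu hrho hbeta hrb B

/-- Second moment of AoI for LCFS-PS (EH only when system is empty), from the MGF. -/
theorem stmt_11 (rho beta mu : ℝ) (hrho : 0 < rho) (hbeta : 0 < beta) (hmu : 0 < mu)
    (B : ℕ) (hB : 1 ≤ B)
    (theta pi1 : ℝ)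
    (htheta : theta = if rho = beta then (B : ℝ)
      else beta * (beta ^ B - rho ^ B) / (rho ^ B * (beta - rho)))
    (hpi1 : pi1 = if rho = beta then 1 / (1 + (B : ℝ) * (1 + rho))
      else rho ^ B * (beta - rho) /
        (rho ^ B * (beta - rho) + beta * (1 + rho) * (beta ^ B - rho ^ B)))
    (M : ℝ → ℝ)
    (hM : ∀ x, M x = rho * (1 + rho) * pi1 * (x ^ 2 * theta - x * theta * (1 + rho + beta)
        + beta * (1 + theta + theta * rho))
      / ((1 - x) * (rho - x) * (1 + rho - x) * (beta - x))) :
    DifferentiableAt ℝ M 0 ∧ DifferentiableAt ℝ (deriv M) 0 ∧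
    (1 / mu ^ 2) * deriv (deriv M) 0 =
      if rho = beta then
        2 * ((B : ℝ) * rho ^ 5 + (4 * (B : ℝ) + 1) * rho ^ 4 + (7 * (B : ℝ) + 5) * rho ^ 3
            + (7 * (B : ℝ) + 12) * rho ^ 2 + (4 * (B : ℝ) + 10) * rho + (B : ℝ) + 3)
          / (mu ^ 2 * rho ^ 2 * (1 + rho) ^ 2 * (1 + (B : ℝ) + (B : ℝ) * rho))
      else
        (2 * beta ^ (B + 3) * (1 + rho) ^ 3 * (1 + rho + rho ^ 2)
            - 2 * rho ^ (B + 3) * ((beta ^ 3 + beta ^ 2 + beta) * (rho ^ 2 + 3 * rho + 2)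
              + beta ^ 3 + beta ^ 2 + (1 + rho) ^ 2))
          / (mu ^ 2 * (1 + rho) ^ 2 * (beta ^ (B + 3) * rho ^ 2 * (1 + rho)
            - rho ^ (B + 3) * beta ^ 2 * (1 + beta))) :=
  stmt_11_general rho beta mu hrho hbeta B theta pi1 htheta hpi1 M hM
end

section
/- The difference Δ₂ᴺᴾ − Δ₂ᴾˢ equals 2(2Bρ³ + ρ²(5B+2) + ρ(4B+5) + B + 2) / (μ²(Bρ³ + ρ²(3B+1) + ρ(3B+2) + B + 1)) when ρ = β, and equals (2β^{B+3}(1+ρ)²(2ρ³+ρ²) − 2ρ^{B+3}((β³+β²)(2ρ²+3ρ) + β(ρ²+ρ))) / (μ²(1+ρ)²(β^{B+3}ρ²(1+ρ) − ρ^{B+3}β²(1+β))) when ρ ≠ β; in both cases Δ₂ᴺᴾ − Δ₂ᴾˢ ≥ 0. -/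
set_option maxHeartbeats 1600000


/-- The gap between the second moments of AoI under LCFS-NP and LCFS-PS
(EH only when system is empty) and its nonnegativity. -/
theorem stmt_14 (rho beta mu : ℝ) (hrho : 0 < rho) (hbeta : 0 < beta) (hmu : 0 < mu)
    (B : ℕ) (hB : 1 ≤ B)
    (D2NP D2PS : ℝ)
    (hNP : D2NP = if rho = beta then
        2 * (3 * (B : ℝ) * rho ^ 3 + (3 * (B : ℝ) + 3) * rho ^ 2
            + (2 * (B : ℝ) + 4) * rho + (B : ℝ) + 3)
          / (mu ^ 2 * rho ^ 2 * (1 + (B : ℝ) + (B : ℝ) * rho))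
      else
        2 * (beta ^ (B + 3) * (3 * rho ^ 3 + 3 * rho ^ 2 + 2 * rho + 1)
            - rho ^ (B + 3) * (3 * beta ^ 3 + 3 * beta ^ 2 + 2 * beta + 1))
          / (mu ^ 2 * (beta ^ (B + 3) * rho ^ 2 * (1 + rho)
            - rho ^ (B + 3) * beta ^ 2 * (beta + 1))))
    (hPS : D2PS = if rho = beta then
        2 * ((B : ℝ) * rho ^ 5 + (4 * (B : ℝ) + 1) * rho ^ 4 + (7 * (B : ℝ) + 5) * rho ^ 3
            + (7 * (B : ℝ) + 12) * rho ^ 2 + (4 * (B : ℝ) + 10) * rho + (B : ℝ) + 3)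
          / (mu ^ 2 * rho ^ 2 * (1 + rho) ^ 2 * (1 + (B : ℝ) + (B : ℝ) * rho))
      else
        (2 * beta ^ (B + 3) * (1 + rho) ^ 3 * (1 + rho + rho ^ 2)
            - 2 * rho ^ (B + 3) * ((beta ^ 3 + beta ^ 2 + beta) * (rho ^ 2 + 3 * rho + 2)
              + beta ^ 3 + beta ^ 2 + (1 + rho) ^ 2))
          / (mu ^ 2 * (1 + rho) ^ 2 * (beta ^ (B + 3) * rho ^ 2 * (1 + rho)
            - rho ^ (B + 3) * beta ^ 2 * (1 + beta)))) :
    (if rho = beta then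
        D2NP - D2PS = 2 * (2 * (B : ℝ) * rho ^ 3 + rho ^ 2 * (5 * (B : ℝ) + 2)
            + rho * (4 * (B : ℝ) + 5) + (B : ℝ) + 2)
          / (mu ^ 2 * ((B : ℝ) * rho ^ 3 + rho ^ 2 * (3 * (B : ℝ) + 1)
            + rho * (3 * (B : ℝ) + 2) + (B : ℝ) + 1))
      else
        D2NP - D2PS = (2 * beta ^ (B + 3) * (1 + rho) ^ 2 * (2 * rho ^ 3 + rho ^ 2)
            - 2 * rho ^ (B + 3) * ((beta ^ 3 + beta ^ 2) * (2 * rho ^ 2 + 3 * rho)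
              + beta * (rho ^ 2 + rho)))
          / (mu ^ 2 * (1 + rho) ^ 2 * (beta ^ (B + 3) * rho ^ 2 * (1 + rho)
            - rho ^ (B + 3) * beta ^ 2 * (1 + beta)))) ∧
    0 ≤ D2NP - D2PS := by
  have h1r : (0:ℝ) < 1 + rho := by linarith
  by_cases hrb : rho = beta
  · -- equal case
    subst hrb
    rw [if_pos rfl] at hNP hPS
    rw [if_pos rfl]
    have hBpos : (0:ℝ) < 1 + (B:ℝ) + (B:ℝ) * rho := by positivity
    have heq : D2NP - D2PS = 2 * (2 * (B : ℝ) * rho ^ 3 + rho ^ 2 * (5 * (B : ℝ) + 2)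
            + rho * (4 * (B : ℝ) + 5) + (B : ℝ) + 2)
          / (mu ^ 2 * ((B : ℝ) * rho ^ 3 + rho ^ 2 * (3 * (B : ℝ) + 1)
            + rho * (3 * (B : ℝ) + 2) + (B : ℝ) + 1)) := by
      have hd : (B:ℝ) * rho ^ 3 + rho ^ 2 * (3 * (B : ℝ) + 1)
            + rho * (3 * (B : ℝ) + 2) + (B : ℝ) + 1 = (1+rho)^2 * (1 + (B:ℝ) + (B:ℝ)*rho) := by
        ring
      rw [hNP, hPS, hd]
      have h2 : mu ^ 2 * rho ^ 2 * (1 + (B:ℝ) + (B:ℝ) * rho) ≠ 0 := by positivity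
      have h3 : mu ^ 2 * rho ^ 2 * (1+rho) ^ 2 * (1 + (B:ℝ) + (B:ℝ) * rho) ≠ 0 := by positivity
      have h4 : mu ^ 2 * ((1+rho)^2 * (1 + (B:ℝ) + (B:ℝ) * rho)) ≠ 0 := by positivity
      field_simp
      ring
    refine ⟨heq, ?_⟩
    rw [heq]
    have hBn : (0:ℝ) ≤ (B:ℝ) := Nat.cast_nonneg B
    apply div_nonneg
    · nlinarith [pow_pos hrho 3, sq_nonneg rho]
    · positivity
  · -- unequal case
    rw [if_neg hrb] at hNP hPS
    rw [if_neg hrb]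
    set S : ℝ := ∑ i ∈ Finset.range (B+1), beta ^ i * rho ^ (B - i) with hSdef
    set S' : ℝ := ∑ i ∈ Finset.range (B+2), beta ^ i * rho ^ (B + 1 - i) with hS'def
    have hgeom : beta ^ (B+1) - rho ^ (B+1) = S * (beta - rho) := by
      rw [hSdef]; exact (geom_sum₂_mul beta rho (B+1)).symm
    have hgeom' : beta ^ (B+2) - rho ^ (B+2) = S' * (beta - rho) := by
      rw [hS'def]; exact (geom_sum₂_mul beta rho (B+2)).symm
    -- positivity of the quotients
    have hSpos : rho ^ B ≤ S := by
      have h0 : (0:ℕ) ∈ Finset.range (B+1) := by simp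
      have := Finset.single_le_sum (f := fun i => beta ^ i * rho ^ (B - i))
        (fun i _ => by positivity) h0
      simpa using this
    have hS'pos : rho ^ (B+1) + beta * rho ^ B ≤ S' := by
      have hsub : Finset.range 2 ⊆ Finset.range (B+2) := by
        apply Finset.range_subset_range.mpr; omega
      have h2 : ∑ i ∈ Finset.range 2, beta ^ i * rho ^ (B + 1 - i)
          = rho ^ (B+1) + beta * rho ^ B := by
        rw [Finset.sum_range_succ, Finset.sum_range_one]
        norm_num
      calc rho ^ (B+1) + beta * rho ^ B
          = ∑ i ∈ Finset.range 2, beta ^ i * rho ^ (B + 1 - i) := h2.symm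
        _ ≤ S' := Finset.sum_le_sum_of_subset_of_nonneg hsub
            (fun i _ _ => by positivity)
    have hpB : (0:ℝ) < rho ^ B := pow_pos hrho B
    have hpB1 : rho ^ (B+1) = rho ^ B * rho := pow_succ rho B
    have hpB2 : rho ^ (B+2) = rho ^ B * rho ^ 2 := by rw [pow_add]
    have hg : (0:ℝ) < (1 + rho) * S - rho ^ (B+1) := by nlinarith
    have hh : (0:ℝ) < (1 + rho)^2 * (2*rho+1) * S' - rho ^ (B+2) * (2*rho+3) * (1 + rho + beta) := by
      nlinarith [mul_pos hbeta hpB, mul_pos (mul_pos hbeta hpB) hrho,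
        mul_pos (mul_pos (mul_pos hbeta hpB) hrho) hrho,
        mul_pos hpB hrho, mul_pos (mul_pos hpB hrho) hrho,
        mul_pos (mul_pos (mul_pos hpB hrho) hrho) hrho]
    -- factorizations
    have hDfac : beta ^ (B+3) * rho ^ 2 * (1 + rho) - rho ^ (B+3) * beta ^ 2 * (1 + beta)
        = beta ^ 2 * rho ^ 2 * (beta - rho) * ((1 + rho) * S - rho ^ (B+1)) := by
      linear_combination (beta ^ 2 * rho ^ 2 * (1 + rho)) * hgeom
    have hNfac : 2 * beta ^ (B + 3) * (1 + rho) ^ 2 * (2 * rho ^ 3 + rho ^ 2)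
            - 2 * rho ^ (B + 3) * ((beta ^ 3 + beta ^ 2) * (2 * rho ^ 2 + 3 * rho)
              + beta * (rho ^ 2 + rho))
        = 2 * beta * rho ^ 2 * (beta - rho)
          * ((1 + rho)^2 * (2*rho+1) * S' - rho ^ (B+2) * (2*rho+3) * (1 + rho + beta)) := by
      linear_combination (2 * beta * rho ^ 2 * (1 + rho)^2 * (2*rho+1)) * hgeom'
    have hsub : beta - rho ≠ 0 := sub_ne_zero.mpr (Ne.symm hrb)
    have hD0 : beta ^ (B+3) * rho ^ 2 * (1 + rho) - rho ^ (B+3) * beta ^ 2 * (1 + beta) ≠ 0 := by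
      rw [hDfac]
      exact mul_ne_zero (mul_ne_zero (by positivity) hsub) (ne_of_gt hg)
    have hD0' : beta ^ (B+3) * rho ^ 2 * (1 + rho) - rho ^ (B+3) * beta ^ 2 * (beta + 1) ≠ 0 := by
      intro hc; apply hD0; linear_combination hc
    have hmu' : mu ≠ 0 := ne_of_gt hmu
    have h1r' : (1:ℝ) + rho ≠ 0 := ne_of_gt h1r
    have heq : D2NP - D2PS = (2 * beta ^ (B + 3) * (1 + rho) ^ 2 * (2 * rho ^ 3 + rho ^ 2)
            - 2 * rho ^ (B + 3) * ((beta ^ 3 + beta ^ 2) * (2 * rho ^ 2 + 3 * rho)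
              + beta * (rho ^ 2 + rho)))
          / (mu ^ 2 * (1 + rho) ^ 2 * (beta ^ (B + 3) * rho ^ 2 * (1 + rho)
            - rho ^ (B + 3) * beta ^ 2 * (1 + beta))) := by
      rw [hNP, hPS]
      field_simp
      ring
    refine ⟨heq, ?_⟩
    rw [heq, hNfac, hDfac]
    rcases lt_or_gt_of_ne hsub with hneg | hpos
    · -- beta < rho : numerator and denominator both nonpositive
      apply div_nonneg_of_nonpos
      · have h1 : (0:ℝ) < 2 * beta * rho ^ 2
            * ((1 + rho)^2 * (2*rho+1) * S' - rho ^ (B+2) * (2*rho+3) * (1 + rho + beta)) := by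
          have : (0:ℝ) < 2 * beta * rho ^ 2 := by positivity
          exact mul_pos this hh
        nlinarith [mul_pos h1 (by linarith : (0:ℝ) < rho - beta)]
      · have h1 : (0:ℝ) < mu ^ 2 * (1 + rho) ^ 2 * (beta ^ 2 * rho ^ 2)
            * ((1 + rho) * S - rho ^ (B+1)) := by
          have : (0:ℝ) < mu ^ 2 * (1 + rho) ^ 2 * (beta ^ 2 * rho ^ 2) := by positivity
          exact mul_pos this hg
        nlinarith [mul_pos h1 (by linarith : (0:ℝ) < rho - beta)]
    · -- rho < beta : both nonnegative
      apply div_nonneg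
      · have h1 : (0:ℝ) < 2 * beta * rho ^ 2
            * ((1 + rho)^2 * (2*rho+1) * S' - rho ^ (B+2) * (2*rho+3) * (1 + rho + beta)) := by
          have : (0:ℝ) < 2 * beta * rho ^ 2 := by positivity
          exact mul_pos this hh
        nlinarith [mul_pos h1 (by linarith : (0:ℝ) < beta - rho)]
      · have h1 : (0:ℝ) < mu ^ 2 * (1 + rho) ^ 2 * (beta ^ 2 * rho ^ 2)
            * ((1 + rho) * S - rho ^ (B+1)) := by
          have : (0:ℝ) < mu ^ 2 * (1 + rho) ^ 2 * (beta ^ 2 * rho ^ 2) := by positivity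
          exact mul_pos this hg
        nlinarith [mul_pos h1 (by linarith : (0:ℝ) < beta - rho)]
end

section
/- The function M satisfies (1/μ)·M′(0) = π₂·(β⁶(1+ρ)² + β⁵·3(1+ρ)³ + β⁴(1+ρ)²(3ρ²+7ρ+3) + β³(1+ρ)(ρ²+3ρ+1)² + β²(ρ⁵+6ρ⁴+12ρ³+6ρ²+ρ) + β·ρ²(1+ρ)(ρ²+5ρ+1) + ρ³(1+ρ)²) / (μρ²β²(1+β)(1+ρ+β)²), and (1/μ²)·M″(0) = 2π₂·(β⁸(1+ρ)(ρ²+ρ+1) + β⁷·4(1+ρ)²(ρ²+ρ+1) + β⁶(1+ρ)(ρ²+ρ+1)(2ρ+3)(3ρ+2) + β⁵(ρ²+ρ+1)(4ρ⁴+19ρ³+31ρ²+19ρ+4) + β⁴(1+ρ)(ρ²+3ρ+1)(ρ⁴+5ρ³+7ρ²+5ρ+1) + β³·ρ(ρ⁶+8ρ⁵+25ρ⁴+39ρ³+25ρ²+8ρ+1) + β²·ρ²(1+ρ)(ρ⁴+7ρ³+18ρ²+7ρ+1) + β·ρ³(1+ρ)²(ρ²+6ρ+1) + ρ⁴(1+ρ)³)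 / (μ²ρ³β³(1+β)(1+ρ+β)³). -/
/-!
`M` is the quotient `N / D` of two polynomials with `D 0 = ρ β (1 + ρ + β) ≠ 0`. Applying the
quotient rule twice expresses `M'(0)` and `M''(0)` through the values of `N`, `D` and their first
two derivatives at `0`, and the claimed closed forms then follow by clearing denominators.
-/

open Polynomial Topology

namespace Polynomial

variable {𝕜 : Type*} [NontriviallyNormedField 𝕜] (p q : 𝕜[X]) {x : 𝕜}

theorem hasDerivAt_eval_div_eval (hq : q.eval x ≠ 0) :
    HasDerivAt (fun y => p.eval y / q.eval y)
      ((p.derivative * q - p * q.derivative).eval x / (q ^ 2).eval x) x := by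
  simpa only [eval_sub, eval_mul, eval_pow] using (p.hasDerivAt x).fun_div (q.hasDerivAt x) hq

theorem deriv_eval_div_eval (hq : q.eval x ≠ 0) :
    deriv (fun y => p.eval y / q.eval y) x =
      (p.derivative.eval x * q.eval x - p.eval x * q.derivative.eval x) / q.eval x ^ 2 := by
  simpa only [eval_sub, eval_mul, eval_pow] using (hasDerivAt_eval_div_eval p q hq).deriv

theorem deriv_deriv_eval_div_eval (hq : q.eval x ≠ 0) :
    deriv (deriv fun y => p.eval y / q.eval y) x =
      (p.derivative.derivative.eval x * q.eval x ^ 2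
        - 2 * p.derivative.eval x * q.eval x * q.derivative.eval x
        - p.eval x * q.eval x * q.derivative.derivative.eval x
        + 2 * p.eval x * q.derivative.eval x ^ 2) / q.eval x ^ 3 := by
  have hq_near : ∀ᶠ y in 𝓝 x, q.eval y ≠ 0 :=
    q.continuous.continuousAt.eventually_ne hq
  have hderiv : deriv (fun y => p.eval y / q.eval y) =ᶠ[𝓝 x]
      fun y => (p.derivative * q - p * q.derivative).eval y / (q ^ 2).eval y :=
    hq_near.mono fun y hy => (hasDerivAt_eval_div_eval p q hy).deriv
  rw [hderiv.deriv_eq, deriv_eval_div_eval _ _ (by simpa using hq)]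
  simp only [derivative_mul, derivative_sub, derivative_pow, eval_add, eval_sub, eval_mul,
    eval_pow, eval_C]
  field_simp
  ring

end Polynomial

theorem stmt_16_general (rho beta mu : ℝ) (hrho : 0 < rho) (hbeta : 0 < beta) (hmu : 0 < mu)
    (gamma' pi2 pi1 : ℝ)
    (hgamma' : gamma' = beta / rho ^ 2 * (1 + rho) * (rho + beta * (1 + rho + beta)))
    (hpi1 : pi1 = rho * pi2 / (beta * (1 + beta)))
    (M : ℝ → ℝ)
    (hM : ∀ x, M x = rho * pi1 * (x ^ 2 * gamma' - x * gamma' * (1 + rho + 2 * beta)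
        + (1 + gamma') * beta * (1 + rho + beta))
      / ((1 - x) * (rho - x) * (beta - x) * (1 + rho + beta - x))) :
    (1 / mu) * deriv M 0 =
      pi2 * (beta ^ 6 * (1 + rho) ^ 2
          + beta ^ 5 * (3 * (1 + rho) ^ 3)
          + beta ^ 4 * ((1 + rho) ^ 2 * (3 * rho ^ 2 + 7 * rho + 3))
          + beta ^ 3 * ((1 + rho) * (rho ^ 2 + 3 * rho + 1) ^ 2)
          + beta ^ 2 * (rho ^ 5 + 6 * rho ^ 4 + 12 * rho ^ 3 + 6 * rho ^ 2 + rho)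
          + beta * (rho ^ 2 * (1 + rho) * (rho ^ 2 + 5 * rho + 1))
          + rho ^ 3 * (1 + rho) ^ 2)
        / (mu * rho ^ 2 * beta ^ 2 * (1 + beta) * (1 + rho + beta) ^ 2) ∧
    (1 / mu ^ 2) * deriv (deriv M) 0 =
      2 * pi2 * (beta ^ 8 * ((1 + rho) * (rho ^ 2 + rho + 1))
          + beta ^ 7 * (4 * (1 + rho) ^ 2 * (rho ^ 2 + rho + 1))
          + beta ^ 6 * ((1 + rho) * (rho ^ 2 + rho + 1) * (2 * rho + 3) * (3 * rho + 2))
          + beta ^ 5 * ((rho ^ 2 + rho + 1)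
            * (4 * rho ^ 4 + 19 * rho ^ 3 + 31 * rho ^ 2 + 19 * rho + 4))
          + beta ^ 4 * ((1 + rho) * (rho ^ 2 + 3 * rho + 1)
            * (rho ^ 4 + 5 * rho ^ 3 + 7 * rho ^ 2 + 5 * rho + 1))
          + beta ^ 3 * (rho * (rho ^ 6 + 8 * rho ^ 5 + 25 * rho ^ 4 + 39 * rho ^ 3
            + 25 * rho ^ 2 + 8 * rho + 1))
          + beta ^ 2 * (rho ^ 2 * (1 + rho)
            * (rho ^ 4 + 7 * rho ^ 3 + 18 * rho ^ 2 + 7 * rho + 1))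
          + beta * (rho ^ 3 * (1 + rho) ^ 2 * (rho ^ 2 + 6 * rho + 1))
          + rho ^ 4 * (1 + rho) ^ 3)
        / (mu ^ 2 * rho ^ 3 * beta ^ 3 * (1 + beta) * (1 + rho + beta) ^ 3) := by
  set N : ℝ[X] := C (rho * pi1) * (X ^ 2 * C gamma' - X * C (gamma' * (1 + rho + 2 * beta))
    + C ((1 + gamma') * beta * (1 + rho + beta)))
  set D : ℝ[X] := (1 - X) * (C rho - X) * (C beta - X) * (C (1 + rho + beta) - X)
  have hM_eq : M = fun x => N.eval x / D.eval x := by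
    funext x
    simp only [hM, N, D, eval_mul, eval_add, eval_sub, eval_pow, eval_C, eval_X, eval_one]
    ring
  have hD0 : D.eval 0 ≠ 0 := by
    simp only [D, eval_mul, eval_sub, eval_C, eval_X, eval_one, sub_zero]
    positivity
  rw [hM_eq, deriv_eval_div_eval N D hD0, deriv_deriv_eval_div_eval N D hD0]
  simp only [N, D, derivative_mul, derivative_add, derivative_sub, derivative_neg, derivative_C,
    derivative_X, derivative_X_pow, derivative_one, eval_neg, eval_mul, eval_add, eval_sub,
    eval_pow, eval_C, eval_X, eval_one, eval_zero, sub_zero, zero_sub, mul_zero, zero_mul,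
    add_zero, zero_add, ne_eq, OfNat.ofNat_ne_zero, not_false_eq_true, zero_pow]
  subst hpi1 hgamma'
  constructor
  · field_simp
    ring
  · field_simp
    ring

/-- First and second moments of AoI for LCFS-PS with B = 2 when the transmitter
can harvest energy anytime, obtained from the MGF. -/
theorem stmt_16 (rho beta mu : ℝ) (hrho : 0 < rho) (hbeta : 0 < beta) (hmu : 0 < mu)
    (gamma' pi2 pi1 : ℝ)
    (hgamma' : gamma' = beta / rho ^ 2 * (1 + rho) * (rho + beta * (1 + rho + beta)))
    (hpi2 : pi2 = (beta ^ 3 * rho + beta ^ 2 * rho * (1 + rho) + beta * rho ^ 2)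
      / (beta ^ 4 * (1 + rho) + beta ^ 3 * (2 * rho ^ 2 + 3 * rho + 1)
        + beta ^ 2 * (rho ^ 3 + 3 * rho ^ 2 + 2 * rho)
        + beta * (rho ^ 3 + 2 * rho ^ 2) + rho ^ 3))
    (hpi1 : pi1 = rho * pi2 / (beta * (1 + beta)))
    (M : ℝ → ℝ)
    (hM : ∀ x, M x = rho * pi1 * (x ^ 2 * gamma' - x * gamma' * (1 + rho + 2 * beta)
        + (1 + gamma') * beta * (1 + rho + beta))
      / ((1 - x) * (rho - x) * (beta - x) * (1 + rho + beta - x))) :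
    (1 / mu) * deriv M 0 =
      pi2 * (beta ^ 6 * (1 + rho) ^ 2
          + beta ^ 5 * (3 * (1 + rho) ^ 3)
          + beta ^ 4 * ((1 + rho) ^ 2 * (3 * rho ^ 2 + 7 * rho + 3))
          + beta ^ 3 * ((1 + rho) * (rho ^ 2 + 3 * rho + 1) ^ 2)
          + beta ^ 2 * (rho ^ 5 + 6 * rho ^ 4 + 12 * rho ^ 3 + 6 * rho ^ 2 + rho)
          + beta * (rho ^ 2 * (1 + rho) * (rho ^ 2 + 5 * rho + 1))
          + rho ^ 3 * (1 + rho) ^ 2)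
        / (mu * rho ^ 2 * beta ^ 2 * (1 + beta) * (1 + rho + beta) ^ 2) ∧
    (1 / mu ^ 2) * deriv (deriv M) 0 =
      2 * pi2 * (beta ^ 8 * ((1 + rho) * (rho ^ 2 + rho + 1))
          + beta ^ 7 * (4 * (1 + rho) ^ 2 * (rho ^ 2 + rho + 1))
          + beta ^ 6 * ((1 + rho) * (rho ^ 2 + rho + 1) * (2 * rho + 3) * (3 * rho + 2))
          + beta ^ 5 * ((rho ^ 2 + rho + 1)
            * (4 * rho ^ 4 + 19 * rho ^ 3 + 31 * rho ^ 2 + 19 * rho + 4))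
          + beta ^ 4 * ((1 + rho) * (rho ^ 2 + 3 * rho + 1)
            * (rho ^ 4 + 5 * rho ^ 3 + 7 * rho ^ 2 + 5 * rho + 1))
          + beta ^ 3 * (rho * (rho ^ 6 + 8 * rho ^ 5 + 25 * rho ^ 4 + 39 * rho ^ 3
            + 25 * rho ^ 2 + 8 * rho + 1))
          + beta ^ 2 * (rho ^ 2 * (1 + rho)
            * (rho ^ 4 + 7 * rho ^ 3 + 18 * rho ^ 2 + 7 * rho + 1))
          + beta * (rho ^ 3 * (1 + rho) ^ 2 * (rho ^ 2 + 6 * rho + 1))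
          + rho ^ 4 * (1 + rho) ^ 3)
        / (mu ^ 2 * rho ^ 3 * beta ^ 3 * (1 + beta) * (1 + rho + beta) ^ 3) :=
  stmt_16_general rho beta mu hrho hbeta hmu gamma' pi2 pi1 hgamma' hpi1 M hM
end

section
/- As β → ∞, D₁(β) tends to ((1+ρ)^{B−2}(2ρ⁵+7ρ⁴+8ρ³+7ρ²+4ρ+1) − ρ^{B+1}(2ρ²+3ρ−1)) / (μρ(1+ρ)((1+ρ)^{B−1}(ρ²+ρ+1) − ρ^{B+1})), and D₂(β) tends to 2((3ρ⁷+14ρ⁶+24ρ⁵+21ρ⁴+18ρ³+12ρ²+5ρ+1)·(1+ρ)^{B−2} − (3ρ⁴+8ρ³+4ρ²−5ρ−1)·ρ^{B+1}) / (μ²ρ²(1+ρ)²((1+ρ)^{B−1}(ρ²+ρ+1) − ρ^{B+1})). Here (1+ρ)^{B−2} denotes the integer power, equal to 1/(1+ρ) when B = 1. -/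
/-!
Put x = β⁻¹. After dividing numerator and denominator by β^(B+1), each of β π₁(β), θ₁(β)/β and
θ₂(β)/β becomes a quotient of functions of x that are continuous at x = 0 with a denominator not
vanishing there (because ρ^(B+1) < (1+ρ)^(B-1)(ρ²+ρ+1)). Hence π₁ decays like 1/β while θ₁, θ₂
grow like β, so the brackets in D₁ and D₂ grow like β³ and β⁴, exactly as their denominators, and
the limits are read off at x = 0.
-/

open Filter Topology

theorem tendsto_div_atTop_of_eq_pow_mul {𝕜 : Type*} [Field 𝕜] [LinearOrder 𝕜]
    [IsStrictOrderedRing 𝕜] [TopologicalSpace 𝕜] [OrderTopology 𝕜]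
    {N D N' D' : 𝕜 → 𝕜} (k : ℕ)
    (hN : ∀ᶠ b in atTop, N b = b ^ k * N' b⁻¹) (hD : ∀ᶠ b in atTop, D b = b ^ k * D' b⁻¹)
    (hN' : ContinuousAt N' 0) (hD' : ContinuousAt D' 0) (h0 : D' 0 ≠ 0) :
    Tendsto (fun b => N b / D b) atTop (𝓝 (N' 0 / D' 0)) := by
  refine ((hN'.div hD' h0).tendsto.comp tendsto_inv_atTop_zero).congr' ?_
  filter_upwards [hN, hD, eventually_gt_atTop 0] with b hNb hDb hb
  rw [Function.comp_apply, Pi.div_apply, hNb, hDb, mul_div_mul_left _ _ (pow_ne_zero k hb.ne')]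

theorem one_add_mul_inv_pow {K : Type*} [Field K] {a b : K} (hb : b ≠ 0) (n : ℕ) :
    (1 + a * b⁻¹) ^ n = (a + b) ^ n / b ^ n := by
  rw [← div_pow]; field_simp; ring

theorem pow_add_two_lt_one_add_pow_mul {rho : ℝ} (hrho : 0 ≤ rho) (n : ℕ) :
    rho ^ (n + 2) < (1 + rho) ^ n * (rho ^ 2 + rho + 1) := by
  have hle : rho ^ n ≤ (1 + rho) ^ n := pow_le_pow_left₀ hrho (by linarith) n
  have hpos : 0 < (1 + rho) ^ n := by positivity
  rw [pow_add]
  nlinarith [mul_le_mul_of_nonneg_right hle (sq_nonneg rho)]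

theorem tendsto_mul_pi1 {rho : ℝ} (hrho : 0 ≤ rho) (n : ℕ) :
    Tendsto (fun b : ℝ => b * (rho * (b - rho * (1 + rho)) * (rho * (1 + rho + b)) ^ n
        / (b ^ (n + 2) * (1 + rho) ^ n * (rho ^ 2 + rho + 1)
          - rho ^ (n + 2) * (1 + rho + b) ^ (n + 1) * (1 + b))))
      atTop (𝓝 (rho ^ (n + 1) / ((1 + rho) ^ n * (rho ^ 2 + rho + 1) - rho ^ (n + 2)))) := by
  simp only [← mul_div_assoc]
  convert tendsto_div_atTop_of_eq_pow_mul (n + 2)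
    (N' := fun x => rho * (1 - rho * (1 + rho) * x) * rho ^ n * (1 + (1 + rho) * x) ^ n)
    (D' := fun x => (1 + rho) ^ n * (rho ^ 2 + rho + 1)
      - rho ^ (n + 2) * (1 + (1 + rho) * x) ^ (n + 1) * (x + 1)) ?hN ?hD (by fun_prop)
      (by fun_prop) ?h0 using 2
  case hN | hD =>
    filter_upwards [eventually_ne_atTop 0] with b hb
    simp only [one_add_mul_inv_pow hb, mul_pow]
    field_simp
    ring
  case h0 => simpa using (sub_pos.2 (pow_add_two_lt_one_add_pow_mul hrho n)).ne'
  all_goals simp; ring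

theorem tendsto_theta1_div {rho : ℝ} (hrho : rho ≠ 0) (n : ℕ) :
    Tendsto (fun b : ℝ => (b ^ (n + 2) * (1 + rho) ^ (n + 1)
        - b * rho ^ (n + 1) * (1 + rho + b) ^ (n + 1))
        / (rho ^ n * (1 + rho + b) ^ n * (b - rho * (1 + rho))) / b)
      atTop (𝓝 (((1 + rho) ^ (n + 1) - rho ^ (n + 1)) / rho ^ n)) := by
  simp only [div_div]
  convert tendsto_div_atTop_of_eq_pow_mul (n + 2)
    (N' := fun x => (1 + rho) ^ (n + 1) - rho ^ (n + 1) * (1 + (1 + rho) * x) ^ (n + 1))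
    (D' := fun x => rho ^ n * (1 + (1 + rho) * x) ^ n * (1 - rho * (1 + rho) * x))
    ?hN ?hD (by fun_prop) (by fun_prop) ?h0 using 2
  case hN | hD =>
    filter_upwards [eventually_ne_atTop 0] with b hb
    simp only [one_add_mul_inv_pow hb]
    field_simp
    ring
  case h0 => simpa using pow_ne_zero n hrho
  all_goals simp

theorem tendsto_theta2_div {rho : ℝ} (hrho : rho ≠ 0) (n : ℕ) :
    Tendsto (fun b : ℝ => (b ^ (n + 2) * (1 + rho) ^ n - rho ^ (n + 2) * (1 + rho + b) ^ (n + 1))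
        / (rho ^ (n + 1) * (1 + rho + b) ^ n * (b - rho * (1 + rho))) / b)
      atTop (𝓝 ((1 + rho) ^ n / rho ^ (n + 1))) := by
  simp only [div_div]
  convert tendsto_div_atTop_of_eq_pow_mul (n + 2)
    (N' := fun x => (1 + rho) ^ n - rho ^ (n + 2) * (1 + (1 + rho) * x) ^ (n + 1) * x)
    (D' := fun x => rho ^ (n + 1) * (1 + (1 + rho) * x) ^ n * (1 - rho * (1 + rho) * x))
    ?hN ?hD (by fun_prop) (by fun_prop) ?h0 using 2
  case hN | hD =>
    filter_upwards [eventually_ne_atTop 0] with b hb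
    simp only [one_add_mul_inv_pow hb]
    field_simp
    ring
  case h0 => simpa using pow_ne_zero (n + 1) hrho
  all_goals simp

theorem tendsto_aoi_firstMoment {rho mu P T1 T2 : ℝ} (hrho : 0 < rho) (hmu : mu ≠ 0)
    {pi1 theta1 theta2 psi4' psi5' D1 : ℝ → ℝ}
    (hpi1 : Tendsto (fun b => b * pi1 b) atTop (𝓝 P))
    (htheta1 : Tendsto (fun b => theta1 b / b) atTop (𝓝 T1))
    (htheta2 : Tendsto (fun b => theta2 b / b) atTop (𝓝 T2))
    (hpsi4' : ∀ b : ℝ, psi4' b =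
      b * (1 + rho + b) * (2 * rho ^ 4 + 5 * rho ^ 3 + 4 * rho ^ 2 + 4 * rho + 1))
    (hpsi5' : ∀ b : ℝ, psi5' b =
      b * (1 + rho) * (1 + rho + b) * (2 * rho ^ 4 + 4 * rho ^ 3 + 3 * rho ^ 2 + 3 * rho + 1))
    (hD1 : ∀ b : ℝ, D1 b =
      pi1 b * ((rho * (1 + rho) ^ 4)
          + b * ((1 + rho) ^ 3 * (2 * rho ^ 2 + 4 * rho + 1))
          + b ^ 2 * (-((1 + rho) * (2 * rho ^ 4 + rho ^ 3 - 8 * rho ^ 2 - 6 * rho - 1)))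
          + b ^ 3 * (-(rho * (2 * rho ^ 3 + 3 * rho ^ 2 - 3 * rho - 2)))
          + theta1 b * psi4' b - (1 - theta2 b) * psi5' b)
        / (mu * rho * b * (1 + rho) ^ 3 * (1 + rho + b))) :
    Tendsto D1 atTop (𝓝 (P * (-(rho * (2 * rho ^ 3 + 3 * rho ^ 2 - 3 * rho - 2))
        + T1 * (2 * rho ^ 4 + 5 * rho ^ 3 + 4 * rho ^ 2 + 4 * rho + 1)
        + T2 * ((1 + rho) * (2 * rho ^ 4 + 4 * rho ^ 3 + 3 * rho ^ 2 + 3 * rho + 1)))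
      / (mu * rho * (1 + rho) ^ 3))) := by
  have hx : Tendsto (fun b : ℝ => b⁻¹) atTop (𝓝 0) := tendsto_inv_atTop_zero
  have hs : Tendsto (fun b : ℝ => (1 + rho) * b⁻¹ + 1) atTop (𝓝 1) := by
    simpa using (hx.const_mul (1 + rho)).add_const 1
  have hpoly := ((show Continuous fun x : ℝ => x ^ 3 * (rho * (1 + rho) ^ 4)
      + x ^ 2 * ((1 + rho) ^ 3 * (2 * rho ^ 2 + 4 * rho + 1))
      + x * (-((1 + rho) * (2 * rho ^ 4 + rho ^ 3 - 8 * rho ^ 2 - 6 * rho - 1)))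
      - rho * (2 * rho ^ 3 + 3 * rho ^ 2 - 3 * rho - 2) by fun_prop).tendsto 0).comp hx
  -- D₁ β = (β π₁ β) (bracket / β³) / (μ ρ (1+ρ)³ (1+ρ+β)/β), each factor written in β⁻¹
  have key := (hpi1.mul ((hpoly.add
      ((htheta1.mul_const (2 * rho ^ 4 + 5 * rho ^ 3 + 4 * rho ^ 2 + 4 * rho + 1)).mul hs)).sub
      (((hx.sub htheta2).mul_const
        ((1 + rho) * (2 * rho ^ 4 + 4 * rho ^ 3 + 3 * rho ^ 2 + 3 * rho + 1))).mul hs))).div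
    (hs.const_mul (mu * rho * (1 + rho) ^ 3)) (by positivity)
  convert key.congr' ?_ using 2
  · simp
  · filter_upwards [eventually_gt_atTop 0] with b hb
    rw [Pi.div_apply, Function.comp_apply, hD1, hpsi4', hpsi5']
    field_simp
    ring

theorem tendsto_aoi_secondMoment {rho mu P T1 T2 : ℝ} (hrho : 0 < rho) (hmu : mu ≠ 0)
    {pi1 theta1 theta2 psi5s psi6s D2 : ℝ → ℝ}
    (hpi1 : Tendsto (fun b => b * pi1 b) atTop (𝓝 P))
    (htheta1 : Tendsto (fun b => theta1 b / b) atTop (𝓝 T1))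
    (htheta2 : Tendsto (fun b => theta2 b / b) atTop (𝓝 T2))
    (hpsi5s : ∀ b : ℝ, psi5s b =
      b ^ 2 * (1 + rho + b) * (3 * rho ^ 6 + 11 * rho ^ 5 + 15 * rho ^ 4 + 11 * rho ^ 3
        + 11 * rho ^ 2 + 5 * rho + 1))
    (hpsi6s : ∀ b : ℝ, psi6s b =
      b ^ 2 * (1 + rho) * (1 + rho + b) * (3 * rho ^ 6 + 9 * rho ^ 5 + 10 * rho ^ 4
        + 7 * rho ^ 3 + 7 * rho ^ 2 + 4 * rho + 1))
    (hD2 : ∀ b : ℝ, D2 b =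
      2 * pi1 b * ((rho ^ 2 * (1 + rho) ^ 5)
          + b * (rho * (1 + rho) ^ 4 * (2 * rho ^ 2 + 4 * rho + 1))
          + b ^ 2 * ((1 + rho) ^ 3 * (3 * rho ^ 4 + 10 * rho ^ 3 + 12 * rho ^ 2 + 5 * rho + 1))
          + b ^ 3 * (-((1 + rho) * (3 * rho ^ 6 + 5 * rho ^ 5 - 11 * rho ^ 4 - 33 * rho ^ 3
            - 23 * rho ^ 2 - 7 * rho - 1)))
          + b ^ 4 * (-(rho * (3 * rho ^ 5 + 8 * rho ^ 4 - 18 * rho ^ 2 - 12 * rho - 2)))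
          + theta1 b * psi5s b - (1 - theta2 b) * psi6s b)
        / (mu ^ 2 * rho ^ 2 * b ^ 2 * (1 + rho) ^ 4 * (1 + rho + b))) :
    Tendsto D2 atTop (𝓝 (2 * P * (-(rho * (3 * rho ^ 5 + 8 * rho ^ 4 - 18 * rho ^ 2 - 12 * rho - 2))
        + T1 * (3 * rho ^ 6 + 11 * rho ^ 5 + 15 * rho ^ 4 + 11 * rho ^ 3 + 11 * rho ^ 2
          + 5 * rho + 1)
        + T2 * ((1 + rho) * (3 * rho ^ 6 + 9 * rho ^ 5 + 10 * rho ^ 4 + 7 * rho ^ 3 + 7 * rho ^ 2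
          + 4 * rho + 1)))
      / (mu ^ 2 * rho ^ 2 * (1 + rho) ^ 4))) := by
  have hx : Tendsto (fun b : ℝ => b⁻¹) atTop (𝓝 0) := tendsto_inv_atTop_zero
  have hs : Tendsto (fun b : ℝ => (1 + rho) * b⁻¹ + 1) atTop (𝓝 1) := by
    simpa using (hx.const_mul (1 + rho)).add_const 1
  have hpoly := ((show Continuous fun x : ℝ => x ^ 4 * (rho ^ 2 * (1 + rho) ^ 5)
      + x ^ 3 * (rho * (1 + rho) ^ 4 * (2 * rho ^ 2 + 4 * rho + 1))
      + x ^ 2 * ((1 + rho) ^ 3 * (3 * rho ^ 4 + 10 * rho ^ 3 + 12 * rho ^ 2 + 5 * rho + 1))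
      + x * (-((1 + rho) * (3 * rho ^ 6 + 5 * rho ^ 5 - 11 * rho ^ 4 - 33 * rho ^ 3
            - 23 * rho ^ 2 - 7 * rho - 1)))
      - rho * (3 * rho ^ 5 + 8 * rho ^ 4 - 18 * rho ^ 2 - 12 * rho - 2) by fun_prop).tendsto 0).comp hx
  have key := ((hpi1.const_mul 2).mul ((hpoly.add
      ((htheta1.mul_const (3 * rho ^ 6 + 11 * rho ^ 5 + 15 * rho ^ 4 + 11 * rho ^ 3
        + 11 * rho ^ 2 + 5 * rho + 1)).mul hs)).sub
      (((hx.sub htheta2).mul_const ((1 + rho) * (3 * rho ^ 6 + 9 * rho ^ 5 + 10 * rho ^ 4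
        + 7 * rho ^ 3 + 7 * rho ^ 2 + 4 * rho + 1))).mul hs))).div
    (hs.const_mul (mu ^ 2 * rho ^ 2 * (1 + rho) ^ 4)) (by positivity)
  convert key.congr' ?_ using 2
  · simp
  · filter_upwards [eventually_gt_atTop 0] with b hb
    rw [Pi.div_apply, Function.comp_apply, hD2, hpsi5s, hpsi6s]
    field_simp
    ring

/-- As the energy arrival rate grows, the first and second moments of AoI for
LCFS-PW (EH only when system is empty) converge to the stated limits, which
depend on the battery capacity B. -/
theorem stmt_17 (rho mu : ℝ) (hrho : 0 < rho) (hmu : 0 < mu)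
    (B : ℕ) (hB : 1 ≤ B)
    (pi1 theta1 theta2 psi4' psi5' psi5s psi6s D1 D2 : ℝ → ℝ)
    (hpi1 : ∀ b : ℝ, pi1 b =
      rho * (b - rho * (1 + rho)) * (rho * (1 + rho + b)) ^ (B - 1)
        / (b ^ (B + 1) * (1 + rho) ^ (B - 1) * (rho ^ 2 + rho + 1)
          - rho ^ (B + 1) * (1 + rho + b) ^ B * (1 + b)))
    (htheta1 : ∀ b : ℝ, theta1 b =
      (b ^ (B + 1) * (1 + rho) ^ B - b * rho ^ B * (1 + rho + b) ^ B)
        / (rho ^ (B - 1) * (1 + rho + b) ^ (B - 1) * (b - rho * (1 + rho))))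
    (htheta2 : ∀ b : ℝ, theta2 b =
      (b ^ (B + 1) * (1 + rho) ^ (B - 1) - rho ^ (B + 1) * (1 + rho + b) ^ B)
        / (rho ^ B * (1 + rho + b) ^ (B - 1) * (b - rho * (1 + rho))))
    (hpsi4' : ∀ b : ℝ, psi4' b =
      b * (1 + rho + b) * (2 * rho ^ 4 + 5 * rho ^ 3 + 4 * rho ^ 2 + 4 * rho + 1))
    (hpsi5' : ∀ b : ℝ, psi5' b =
      b * (1 + rho) * (1 + rho + b) * (2 * rho ^ 4 + 4 * rho ^ 3 + 3 * rho ^ 2 + 3 * rho + 1))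
    (hpsi5s : ∀ b : ℝ, psi5s b =
      b ^ 2 * (1 + rho + b) * (3 * rho ^ 6 + 11 * rho ^ 5 + 15 * rho ^ 4 + 11 * rho ^ 3
        + 11 * rho ^ 2 + 5 * rho + 1))
    (hpsi6s : ∀ b : ℝ, psi6s b =
      b ^ 2 * (1 + rho) * (1 + rho + b) * (3 * rho ^ 6 + 9 * rho ^ 5 + 10 * rho ^ 4
        + 7 * rho ^ 3 + 7 * rho ^ 2 + 4 * rho + 1))
    (hD1 : ∀ b : ℝ, D1 b =
      pi1 b * ((rho * (1 + rho) ^ 4)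
          + b * ((1 + rho) ^ 3 * (2 * rho ^ 2 + 4 * rho + 1))
          + b ^ 2 * (-((1 + rho) * (2 * rho ^ 4 + rho ^ 3 - 8 * rho ^ 2 - 6 * rho - 1)))
          + b ^ 3 * (-(rho * (2 * rho ^ 3 + 3 * rho ^ 2 - 3 * rho - 2)))
          + theta1 b * psi4' b - (1 - theta2 b) * psi5' b)
        / (mu * rho * b * (1 + rho) ^ 3 * (1 + rho + b)))
    (hD2 : ∀ b : ℝ, D2 b =
      2 * pi1 b * ((rho ^ 2 * (1 + rho) ^ 5)
          + b * (rho * (1 + rho) ^ 4 * (2 * rho ^ 2 + 4 * rho + 1))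
          + b ^ 2 * ((1 + rho) ^ 3 * (3 * rho ^ 4 + 10 * rho ^ 3 + 12 * rho ^ 2 + 5 * rho + 1))
          + b ^ 3 * (-((1 + rho) * (3 * rho ^ 6 + 5 * rho ^ 5 - 11 * rho ^ 4 - 33 * rho ^ 3
            - 23 * rho ^ 2 - 7 * rho - 1)))
          + b ^ 4 * (-(rho * (3 * rho ^ 5 + 8 * rho ^ 4 - 18 * rho ^ 2 - 12 * rho - 2)))
          + theta1 b * psi5s b - (1 - theta2 b) * psi6s b)
        / (mu ^ 2 * rho ^ 2 * b ^ 2 * (1 + rho) ^ 4 * (1 + rho + b))) :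
    Tendsto D1 atTop (𝓝
      (((1 + rho) ^ ((B : ℤ) - 2) * (2 * rho ^ 5 + 7 * rho ^ 4 + 8 * rho ^ 3
          + 7 * rho ^ 2 + 4 * rho + 1)
        - rho ^ (B + 1) * (2 * rho ^ 2 + 3 * rho - 1))
      / (mu * rho * (1 + rho) * ((1 + rho) ^ (B - 1) * (rho ^ 2 + rho + 1)
        - rho ^ (B + 1))))) ∧
    Tendsto D2 atTop (𝓝
      (2 * ((3 * rho ^ 7 + 14 * rho ^ 6 + 24 * rho ^ 5 + 21 * rho ^ 4 + 18 * rho ^ 3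
          + 12 * rho ^ 2 + 5 * rho + 1) * (1 + rho) ^ ((B : ℤ) - 2)
        - (3 * rho ^ 4 + 8 * rho ^ 3 + 4 * rho ^ 2 - 5 * rho - 1) * rho ^ (B + 1))
      / (mu ^ 2 * rho ^ 2 * (1 + rho) ^ 2 * ((1 + rho) ^ (B - 1) * (rho ^ 2 + rho + 1)
        - rho ^ (B + 1))))) := by
  obtain ⟨n, rfl⟩ : ∃ n, B = n + 1 := ⟨B - 1, by omega⟩
  simp only [Nat.add_sub_cancel] at hpi1 htheta1 htheta2 ⊢
  have hP := (tendsto_mul_pi1 hrho.le n).congr fun b => (congrArg (b * ·) (hpi1 b)).symm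
  have hT1 := (tendsto_theta1_div hrho.ne' n).congr fun b => (congrArg (· / b) (htheta1 b)).symm
  have hT2 := (tendsto_theta2_div hrho.ne' n).congr fun b => (congrArg (· / b) (htheta2 b)).symm
  have hzpow : (1 + rho) ^ (((n + 1 : ℕ) : ℤ) - 2) = (1 + rho) ^ n / (1 + rho) := by
    rw [Nat.cast_add_one, add_sub_assoc, zpow_add₀ (by positivity), zpow_natCast]
    norm_num [div_eq_mul_inv]
  have hden := (sub_pos.2 (pow_add_two_lt_one_add_pow_mul hrho.le n)).ne'
  rw [hzpow]
  constructor
  · convert tendsto_aoi_firstMoment hrho hmu.ne' hP hT1 hT2 hpsi4' hpsi5' hD1 using 2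
    field_simp
    ring
  · convert tendsto_aoi_secondMoment hrho hmu.ne' hP hT1 hT2 hpsi5s hpsi6s hD2 using 2
    field_simp
    ring
end
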